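/- arXiv:2405.11889 — 8 statements merged into one kernel-verified Lean document; each statement's English description precedes it below -/
import Mathlib

section
/- If b is sampled uniformly from [0,1] and w, δ > 0, then the probability that ⌊log₂ w - b⌋ ≠ ⌊log₂(w+δ) - b⌋ is at most δ / (w · log 2), where log 2 denotes the natural logarithm of 2. -/
/-! The two floors differ exactly when an integer lies in `(log₂ w - b, log₂ (w + δ) - b]`.
Shifting `log₂ w` to its fractional part `c`, this happens for `b` in `[0, c + d - 1] ∪ (c, c + d]`
(with `d = log₂ (w + δ) - log₂ w`), a set of measure at most `d` inside `[0, 1]`; and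
`d = log₂ (1 + δ / w) ≤ δ / (w log 2)` by `log t ≤ t - 1`. -/

open MeasureTheory

theorem Int.floor_ne_floor_add_iff {R : Type*} [Ring R] [LinearOrder R] [IsStrictOrderedRing R]
    [FloorRing R] {a d : R} (hd : 0 ≤ d) : ⌊a⌋ ≠ ⌊a + d⌋ ↔ 1 ≤ Int.fract a + d := by
  have hsplit : ⌊a + d⌋ = ⌊a⌋ + ⌊Int.fract a + d⌋ := by
    conv_lhs => rw [← Int.floor_add_fract a, add_assoc, Int.floor_intCast_add]
  rw [hsplit, Ne, left_eq_add, Int.floor_eq_zero_iff, Set.mem_Ico, not_and, not_lt]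
  exact ⟨fun h => h (add_nonneg (Int.fract_nonneg a) hd), fun h _ => h⟩

theorem setOf_floor_sub_ne_floor_add_sub_subset (x : ℝ) {d : ℝ} (hd : 0 ≤ d) :
    {b ∈ Set.Icc (0 : ℝ) 1 | ⌊x - b⌋ ≠ ⌊x + d - b⌋} ⊆
      Set.Icc 0 (Int.fract x + d - 1) ∪ Set.Ioc (Int.fract x) (min (Int.fract x + d) 1) := by
  rintro b ⟨⟨hb0, hb1⟩, hne⟩
  have hfract : Int.fract (x - b) = Int.fract (Int.fract x - b) := by
    rw [← Int.self_sub_floor x, sub_right_comm, Int.fract_sub_intCast]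
  set c := Int.fract x
  have hc0 : 0 ≤ c := Int.fract_nonneg x
  have hc1 : c < 1 := Int.fract_lt_one x
  rw [add_sub_right_comm, Int.floor_ne_floor_add_iff hd, hfract] at hne
  -- `b ↦ fract (c - b)` is `c - b` on `[0, c]` and jumps to `c - b + 1` on `(c, 1]`.
  rcases le_or_gt b c with hbc | hcb
  · have : Int.fract (c - b) = c - b := Int.fract_eq_self.mpr ⟨by linarith, by linarith⟩
    exact Or.inl ⟨hb0, by linarith⟩
  · have : Int.fract (c - b) = c - b + 1 := by
      rw [← Int.fract_add_one, Int.fract_eq_self.mpr ⟨by linarith, by linarith⟩]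
    exact Or.inr ⟨hcb, le_min (by linarith) hb1⟩

theorem volume_Icc_union_Ioc_min_le {c d : ℝ} (hc : c ≤ 1) :
    volume (Set.Icc 0 (c + d - 1) ∪ Set.Ioc c (min (c + d) 1)) ≤ ENNReal.ofReal d := by
  refine (measure_union_le _ _).trans ?_
  rw [Real.volume_Icc, Real.volume_Ioc, sub_zero]
  rcases le_total (c + d) 1 with hcd | hcd
  · rw [min_eq_left hcd, ENNReal.ofReal_of_nonpos (by linarith), zero_add, add_sub_cancel_left]
  · rw [min_eq_right hcd, ← ENNReal.ofReal_add (by linarith) (by linarith)]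
    exact ENNReal.ofReal_le_ofReal (by linarith)

theorem volume_setOf_floor_sub_ne_floor_sub_le {x y : ℝ} (hxy : x ≤ y) :
    volume {b ∈ Set.Icc (0 : ℝ) 1 | ⌊x - b⌋ ≠ ⌊y - b⌋} ≤ ENNReal.ofReal (y - x) := by
  obtain ⟨d, hd, rfl⟩ : ∃ d, 0 ≤ d ∧ y = x + d := ⟨y - x, sub_nonneg.mpr hxy, by ring⟩
  rw [add_sub_cancel_left]
  exact (measure_mono (setOf_floor_sub_ne_floor_add_sub_subset x hd)).trans
    (volume_Icc_union_Ioc_min_le (Int.fract_lt_one x).le)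

theorem Real.logb_add_sub_logb_le {b w δ : ℝ} (hb : 1 < b) (hw : 0 < w) (hwδ : 0 < w + δ) :
    Real.logb b (w + δ) - Real.logb b w ≤ δ / (w * Real.log b) := by
  have hlogb : 0 < Real.log b := Real.log_pos hb
  have hlog : Real.log ((w + δ) / w) ≤ δ / w := by
    have := Real.log_le_sub_one_of_pos (div_pos hwδ hw)
    rwa [div_sub_one hw.ne', add_sub_cancel_left] at this
  rw [Real.logb, Real.logb, div_sub_div_same, ← Real.log_div hwδ.ne' hw.ne', ← div_div]
  gcongr

theorem stmt_2 (w δ : ℝ) (hw : 0 < w) (hδ : 0 < δ) :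
    volume {b ∈ Set.Icc (0 : ℝ) 1 |
        ⌊Real.logb 2 w - b⌋ ≠ ⌊Real.logb 2 (w + δ) - b⌋}
      ≤ ENNReal.ofReal (δ / (w * Real.log 2)) := by
  have hwδ : 0 < w + δ := by linarith
  calc _ ≤ ENNReal.ofReal (Real.logb 2 (w + δ) - Real.logb 2 w) :=
        volume_setOf_floor_sub_ne_floor_sub_le
          (Real.logb_le_logb_of_le one_lt_two hw (le_add_of_nonneg_right hδ.le))
    _ ≤ ENNReal.ofReal (δ / (w * Real.log 2)) :=
        ENNReal.ofReal_le_ofReal (Real.logb_add_sub_logb_le one_lt_two hw hwδ)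
end

section
/- Let n ≥ 5 be odd and let G be a path on vertices v₁,…,vₙ. Let w assign weight 1 to every edge, and w' assign weight 0 to the first and last edges and 1 to all others. Then the unique core allocation of the matching game for w assigns 1 to every even-indexed vertex and 0 to every odd-indexed vertex, while the unique core allocation for w' assigns 1 to every odd-indexed vertex except v₁ and vₙ, and 0 otherwise. Consequently, any map A from weight vectors to core allocations satisfies ‖A(w) - A(w')‖₁ / ‖w - w'‖₁ = (n-2)/2. -/
/-- `M` is a matching of the path `v₁ — v₂ — ⋯ — vₙ` (edge `i` joins `i` and `i+1`)
inside the induced subgraph on the vertex set `S`. -/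
def PathMatching (n : ℕ) (S : Finset ℕ) (M : Finset ℕ) : Prop :=
  M ⊆ Finset.Icc 1 (n - 1) ∧ (∀ i ∈ M, i ∈ S ∧ i + 1 ∈ S) ∧
    ∀ i ∈ M, ∀ j ∈ M, i ≠ j → i + 1 ≠ j ∧ j + 1 ≠ i

/-- The characteristic function of the matching game on the path:
maximum weight of a matching in the subgraph induced by `S`. -/
noncomputable def pathNu (n : ℕ) (w : ℕ → ℝ) (S : Finset ℕ) : ℝ :=
  sSup {t | ∃ M : Finset ℕ, PathMatching n S M ∧ t = ∑ i ∈ M, w i}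

/-- `x` is a core allocation of the matching game on the path with weights `w`. -/
def InCore (n : ℕ) (w : ℕ → ℝ) (x : ℕ → ℝ) : Prop :=
  (∀ S ⊆ Finset.Icc 1 n, S ≠ Finset.Icc 1 n → pathNu n w S ≤ ∑ v ∈ S, x v) ∧
    ∑ v ∈ Finset.Icc 1 n, x v = pathNu n w (Finset.Icc 1 n)

/-!
On a path, an allocation in the core is pinned down by the constraints on the prefixes
`[1, m]` and the complementary suffixes `[m + 1, n]`: whenever `ν [1, m] + ν [m + 1, n] = ν V`
for every cut, both constraints are tight, so `x v = ν [1, v] - ν [1, v - 1]`.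
For 0/1 weights supported on the edges of a sub-path `[a, b]`, an interval `[s, t]` has value
`⌊|[s, t] ∩ [a, b]| / 2⌋`, and for odd `n` both weightings of the theorem are additive at every
cut. The two core allocations then differ exactly at the `n - 2` interior vertices, while the
weightings differ on the two end edges.
-/

open Finset

lemma natCast_sub_natCast_eq_ite {p q : ℕ} {P : Prop} [Decidable P]
    (h : p = if P then q + 1 else q) : (p : ℝ) - q = if P then 1 else 0 := by
  split_ifs at h ⊢ <;> simp [h]

lemma two_mul_card_le_of_add_one_notMem {M : Finset ℕ} {a b : ℕ} (hM : M ⊆ Ico a b)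
    (hsucc : ∀ i ∈ M, i + 1 ∉ M) : 2 * #M ≤ b + 1 - a := by
  have hdisj : Disjoint M (M.image (· + 1)) := by
    simp only [disjoint_left, mem_image, not_exists, not_and]
    rintro _ hj i hi rfl
    exact hsucc i hi hj
  have hsub : M ∪ M.image (· + 1) ⊆ Icc a b := by
    intro x hx
    simp only [mem_union, mem_image] at hx
    rcases hx with hx | ⟨i, hi, rfl⟩
    · have := mem_Ico.mp (hM hx); exact mem_Icc.mpr (by omega)
    · have := mem_Ico.mp (hM hi); exact mem_Icc.mpr (by omega)
  have := card_le_card hsub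
  rw [card_union_of_disjoint hdisj, card_image_of_injective _ (add_left_injective 1),
    Nat.card_Icc] at this
  omega

lemma PathMatching.add_one_notMem {n : ℕ} {S M : Finset ℕ} (hM : PathMatching n S M)
    {i : ℕ} (hi : i ∈ M) : i + 1 ∉ M :=
  fun hi' => (hM.2.2 i hi (i + 1) hi' (by omega)).1 rfl

lemma pathMatching_alternate {n s t c k : ℕ} (hc : 1 ≤ c) (hs : s ≤ c)
    (ht : 2 * k ≤ t + 1 - c) (hn : 2 * k ≤ n + 1 - c) :
    PathMatching n (Icc s t) ((range k).image (c + 2 * ·)) := by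
  simp only [PathMatching, subset_iff, forall_mem_image, mem_range, mem_Icc]
  exact ⟨fun j hj => by omega, fun j hj => by omega, fun i _ j _ hij => by omega⟩

lemma pathNu_Icc_of_indicator {n a b : ℕ} {w : ℕ → ℝ} (ha : 1 ≤ a) (hb : b ≤ n)
    (hw : ∀ i ∈ Icc 1 (n - 1), w i = if a ≤ i ∧ i + 1 ≤ b then 1 else 0) (s t : ℕ) :
    pathNu n w (Icc s t) = ((min t b + 1 - max s a) / 2 : ℕ) := by
  refine IsGreatest.csSup_eq ⟨⟨_, pathMatching_alternate (c := max s a)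
    (k := (min t b + 1 - max s a) / 2) (by omega) (by omega) (by omega) (by omega), ?_⟩, ?_⟩
  · rw [sum_image (fun i _ j _ h => by omega), sum_congr rfl
      (fun j hj => by rw [hw _ (by simp at hj ⊢; omega), if_pos (by simp at hj; omega)])]
    simp
  · rintro _ ⟨M, hM, rfl⟩
    rw [sum_congr rfl (fun i hi => hw i (hM.1 hi)), sum_boole]
    have hcard := two_mul_card_le_of_add_one_notMem (a := max s a) (b := min t b)
      (M := M.filter fun i => a ≤ i ∧ i + 1 ≤ b) ?_ ?_
    · exact_mod_cast (by omega : _ ≤ (min t b + 1 - max s a) / 2)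
    · intro i hi
      obtain ⟨hiM, hab⟩ := mem_filter.mp hi
      have := hM.2.1 i hiM
      simp only [mem_Icc, mem_Ico] at this ⊢
      omega
    · exact fun i hi hi' => hM.add_one_notMem (mem_filter.mp hi).1 (mem_filter.mp hi').1

variable {n : ℕ} {w x : ℕ → ℝ}

namespace InCore

lemma pathNu_le_sum (hx : InCore n w x) {S : Finset ℕ} (hS : S ⊆ Icc 1 n) :
    pathNu n w S ≤ ∑ v ∈ S, x v := by
  by_cases h : S = Icc 1 n
  · exact h ▸ hx.2.ge
  · exact hx.1 S hS h

lemma sum_Icc_one_eq (hx : InCore n w x)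
    (hsplit : ∀ m < n, pathNu n w (Icc 1 m) + pathNu n w (Icc (m + 1) n) =
      pathNu n w (Icc 1 n)) {m : ℕ} (hm : m ≤ n) :
    ∑ v ∈ Icc 1 m, x v = pathNu n w (Icc 1 m) := by
  rcases hm.eq_or_lt with rfl | hm
  · exact hx.2
  have hunion : ∑ v ∈ Icc 1 m, x v + ∑ v ∈ Icc (m + 1) n, x v = ∑ v ∈ Icc 1 n, x v := by
    rw [← sum_union (disjoint_left.mpr fun v hv hv' => by simp at hv hv'; omega)]
    congr 1
    ext v; simp only [mem_union, mem_Icc]; omega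
  have hpre := hx.pathNu_le_sum (S := Icc 1 m) (Icc_subset_Icc le_rfl hm.le)
  have hsuf := hx.pathNu_le_sum (S := Icc (m + 1) n) (Icc_subset_Icc (by omega) le_rfl)
  linarith [hsplit m hm, hx.2]

lemma apply_eq (hx : InCore n w x)
    (hsplit : ∀ m < n, pathNu n w (Icc 1 m) + pathNu n w (Icc (m + 1) n) =
      pathNu n w (Icc 1 n)) {v : ℕ} (hv : v ∈ Icc 1 n) :
    x v = pathNu n w (Icc 1 v) - pathNu n w (Icc 1 (v - 1)) := by
  rw [mem_Icc] at hv
  have hsum : ∑ u ∈ Icc 1 v, x u = ∑ u ∈ Icc 1 (v - 1), x u + x v := by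
    obtain ⟨k, rfl⟩ : ∃ k, v = k + 1 := ⟨v - 1, by omega⟩
    exact sum_Icc_succ_top (by omega) x
  rw [← hx.sum_Icc_one_eq hsplit hv.2, ← hx.sum_Icc_one_eq hsplit (by omega), hsum]
  ring

lemma apply_of_unit_weights (hodd : Odd n) (hw : ∀ i ∈ Icc 1 (n - 1), w i = 1)
    (hx : InCore n w x) {v : ℕ} (hv : v ∈ Icc 1 n) :
    x v = if Even v then 1 else 0 := by
  have hν := pathNu_Icc_of_indicator (n := n) (w := w) le_rfl le_rfl fun i hi => by
    rw [hw i hi, if_pos (by simp only [mem_Icc] at hi; omega)]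
  obtain ⟨K, rfl⟩ := hodd
  rw [hx.apply_eq (fun m hm => by simp only [hν]; norm_cast; omega) hv, hν, hν]
  apply natCast_sub_natCast_eq_ite
  simp only [mem_Icc] at hv
  simp only [Nat.even_iff]
  split_ifs <;> omega

lemma apply_of_zero_end_weights (hodd : Odd n)
    (hw : ∀ i ∈ Icc 1 (n - 1), w i = if i = 1 ∨ i = n - 1 then 0 else 1)
    (hx : InCore n w x) {v : ℕ} (hv : v ∈ Icc 1 n) :
    x v = if ¬ Even v ∧ v ≠ 1 ∧ v ≠ n then 1 else 0 := by
  have hν := pathNu_Icc_of_indicator (n := n) (w := w) (a := 2) (b := n - 1) (by norm_num)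
    (by omega) fun i hi => by
      rw [hw i hi]
      simp only [mem_Icc] at hi
      split_ifs <;> first | rfl | omega
  obtain ⟨K, rfl⟩ := hodd
  rw [hx.apply_eq (fun m hm => by simp only [hν]; norm_cast; omega) hv, hν, hν]
  apply natCast_sub_natCast_eq_ite
  simp only [mem_Icc] at hv
  simp only [Nat.even_iff]
  split_ifs <;> omega

end InCore

lemma sum_abs_sub_parity_indicators (hn : 3 ≤ n) (hodd : Odd n) :
    ∑ v ∈ Icc 1 n, |((if Even v then 1 else 0) : ℝ) -
      (if ¬ Even v ∧ v ≠ 1 ∧ v ≠ n then 1 else 0)| = (n : ℝ) - 2 := by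
  have hterm : ∀ v ∈ Icc 1 n, |((if Even v then 1 else 0) : ℝ) -
      (if ¬ Even v ∧ v ≠ 1 ∧ v ≠ n then 1 else 0)| = if v ∈ Icc 2 (n - 1) then 1 else 0 := by
    intro v hv
    obtain ⟨K, rfl⟩ := hodd
    simp only [mem_Icc, Nat.even_iff] at hv ⊢
    split_ifs <;> first | omega | norm_num
  rw [sum_congr rfl hterm, sum_boole, filter_mem_eq_inter,
    inter_eq_right.mpr (Icc_subset_Icc (by omega) (by omega)), Nat.card_Icc,
    show n - 1 + 1 - 2 = n - 2 by omega, Nat.cast_sub (by omega)]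
  norm_num

lemma sum_abs_sub_end_edge_weights (hn : 3 ≤ n) :
    ∑ i ∈ Icc 1 (n - 1), |(1 : ℝ) - (if i = 1 ∨ i = n - 1 then 0 else 1)| = 2 := by
  have hterm : ∀ i ∈ Icc 1 (n - 1), |(1 : ℝ) - (if i = 1 ∨ i = n - 1 then 0 else 1)| =
      if i ∈ ({1, n - 1} : Finset ℕ) then 1 else 0 := by
    intro i _
    simp only [mem_insert, mem_singleton]
    split_ifs <;> norm_num
  rw [sum_congr rfl hterm, sum_boole, filter_mem_eq_inter,
    inter_eq_right.mpr (by intro i; simp only [mem_insert, mem_singleton, mem_Icc]; omega),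
    card_pair (by omega)]
  norm_num

theorem stmt_6 (n : ℕ) (hn : 5 ≤ n) (hodd : Odd n)
    (w w' : ℕ → ℝ)
    (hw : ∀ i ∈ Finset.Icc 1 (n - 1), w i = 1)
    (hw' : ∀ i ∈ Finset.Icc 1 (n - 1), w' i = if i = 1 ∨ i = n - 1 then 0 else 1) :
    (∀ x : ℕ → ℝ, InCore n w x →
        ∀ v ∈ Finset.Icc 1 n, x v = if Even v then 1 else 0) ∧
    (∀ x : ℕ → ℝ, InCore n w' x →
        ∀ v ∈ Finset.Icc 1 n, x v = if ¬ Even v ∧ v ≠ 1 ∧ v ≠ n then 1 else 0) ∧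
    (∀ A : (ℕ → ℝ) → (ℕ → ℝ), InCore n w (A w) → InCore n w' (A w') →
        (∑ v ∈ Finset.Icc 1 n, |A w v - A w' v|) /
            (∑ i ∈ Finset.Icc 1 (n - 1), |w i - w' i|) = ((n : ℝ) - 2) / 2) := by
  have hcore (x) (hx : InCore n w x) (v) (hv : v ∈ Icc 1 n) :=
    hx.apply_of_unit_weights hodd hw hv
  have hcore' (x) (hx : InCore n w' x) (v) (hv : v ∈ Icc 1 n) :=
    hx.apply_of_zero_end_weights hodd hw' hv
  refine ⟨hcore, hcore', fun A hA hA' => ?_⟩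
  have hnum : ∑ v ∈ Icc 1 n, |A w v - A w' v| = n - 2 := by
    rw [← sum_abs_sub_parity_indicators (by omega) hodd]
    exact sum_congr rfl fun v hv => by rw [hcore _ hA v hv, hcore' _ hA' v hv]
  have hden : ∑ i ∈ Icc 1 (n - 1), |w i - w' i| = 2 := by
    rw [← sum_abs_sub_end_edge_weights (n := n) (by omega)]
    exact sum_congr rfl fun i hi => by rw [hw i hi, hw' i hi]
  rw [hnum, hden]
end

section
/- Let (V, ν_w) be a family of welfare allocation games parametrized by weight vectors w, with |ν(V,w) - ν(V,w')| ≤ ‖w - w'‖₁ for all w, w'. Suppose A maps each weight vector w to a vector A(w) ∈ ℝ≥0^V with ‖A(w)‖₁ ≤ D·ν(V,w), Σ_{v∈S} A(w)_v ≥ ν(S,w) for all S ⊆ V, and ‖A(w) - A(w')‖₁ ≤ L‖w - w'‖₁. Then the rescaled allocation x(w) = (ν(V,w)/‖A(w)‖₁)·A(w) lies in the (1/D)-approximate core and satisfies ‖x(w) - x(w')‖₁ ≤ (2L+1)‖w - w'‖₁ for all w, w'. -/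
/-!
Write `c = ν(V,w) / ‖A(w)‖₁`. Since `ν(V,w) ≤ ‖A(w)‖₁ ≤ D·ν(V,w)`, the factor satisfies
`1/D ≤ c ≤ 1`, and the lower bound `ν(S,w) ≤ Σ_{v∈S} A(w)_v` gives the approximate core.
For the Lipschitz bound split `c A - c' A' = c (A - A') + (c - c') A'`: the first term costs at most
`‖A - A'‖₁`, and `(c - c')‖A'‖₁ = c (‖A'‖₁ - ‖A‖₁) + (ν(V,w) - ν(V,w'))` costs at most
`‖A - A'‖₁ + |ν(V,w) - ν(V,w')|`.
-/

open Finset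

section

variable {V : Type*} [Fintype V]

theorem sum_div_sum_mul_eq {a : V → ℝ} (t : ℝ) (ha : ∑ u, a u ≠ 0) :
    ∑ v, t / (∑ u, a u) * a v = t := by
  rw [← mul_sum, div_mul_cancel₀ _ ha]

theorem one_div_mul_le_sum_div_sum_mul {a : V → ℝ} {t D m : ℝ} (S : Finset V)
    (ha : 0 < ∑ u, a u) (ht : 0 ≤ t) (hm : 0 ≤ m) (hmS : m ≤ ∑ v ∈ S, a v)
    (hD : ∑ u, a u ≤ D * t) :
    1 / D * m ≤ ∑ v ∈ S, t / (∑ u, a u) * a v := by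
  have hDt : 0 < D * t := ha.trans_le hD
  have hc : 1 / D ≤ t / ∑ u, a u := by
    rw [div_le_div_iff₀ (pos_of_mul_pos_left hDt ht) ha]
    linarith
  rw [← mul_sum]
  calc 1 / D * m ≤ t / (∑ u, a u) * m := mul_le_mul_of_nonneg_right hc hm
    _ ≤ t / (∑ u, a u) * ∑ v ∈ S, a v := mul_le_mul_of_nonneg_left hmS (by positivity)

theorem sum_abs_mul_sub_mul_le {a b : V → ℝ} (c c' : ℝ) (hc : 0 ≤ c) (hb : ∀ v, 0 ≤ b v) :
    ∑ v, |c * a v - c' * b v| ≤ c * ∑ v, |a v - b v| + |c - c'| * ∑ v, b v := by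
  rw [mul_sum, mul_sum, ← sum_add_distrib]
  refine sum_le_sum fun v _ => ?_
  calc |c * a v - c' * b v| = |c * (a v - b v) + (c - c') * b v| := by ring_nf
    _ ≤ |c * (a v - b v)| + |(c - c') * b v| := abs_add_le _ _
    _ = c * |a v - b v| + |c - c'| * b v := by
      rw [abs_mul, abs_mul, abs_of_nonneg hc, abs_of_nonneg (hb v)]

theorem abs_sub_div_sum_mul_sum_le {a b : V → ℝ} {t t' : ℝ}
    (ha : 0 < ∑ u, a u) (hb : 0 < ∑ u, b u) (ht : 0 ≤ t) (hta : t ≤ ∑ u, a u) :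
    |t / (∑ u, a u) - t' / (∑ u, b u)| * ∑ u, b u ≤ ∑ v, |a v - b v| + |t - t'| := by
  set c := t / ∑ u, a u
  have hc : 0 ≤ c := by positivity
  have hc1 : c ≤ 1 := div_le_one_of_le₀ hta ha.le
  have hsplit : (c - t' / ∑ u, b u) * ∑ u, b u = c * (∑ u, b u - ∑ u, a u) + (t - t') := by
    simp only [c]
    field_simp
    ring
  have hsums : |∑ u, b u - ∑ u, a u| ≤ ∑ v, |a v - b v| := by
    rw [abs_sub_comm, ← sum_sub_distrib]
    exact abs_sum_le_sum_abs _ _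
  calc |c - t' / ∑ u, b u| * ∑ u, b u = |c * (∑ u, b u - ∑ u, a u) + (t - t')| := by
        rw [← hsplit, abs_mul, abs_of_pos hb]
    _ ≤ c * |∑ u, b u - ∑ u, a u| + |t - t'| := by
        grw [abs_add_le, abs_mul, abs_of_nonneg hc]
    _ ≤ ∑ v, |a v - b v| + |t - t'| := by
        gcongr
        exact (mul_le_of_le_one_left (abs_nonneg _) hc1).trans hsums

theorem sum_abs_div_sum_mul_sub_le {a b : V → ℝ} {t t' : ℝ} (hb : ∀ v, 0 ≤ b v)
    (ha : 0 < ∑ u, a u) (hb' : 0 < ∑ u, b u) (ht : 0 ≤ t) (hta : t ≤ ∑ u, a u) :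
    ∑ v, |t / (∑ u, a u) * a v - t' / (∑ u, b u) * b v| ≤ 2 * ∑ v, |a v - b v| + |t - t'| := by
  have hc1 : t / ∑ u, a u ≤ 1 := div_le_one_of_le₀ hta ha.le
  have hAB : 0 ≤ ∑ v, |a v - b v| := sum_nonneg fun v _ => abs_nonneg _
  calc _ ≤ t / (∑ u, a u) * ∑ v, |a v - b v| + |t / (∑ u, a u) - t' / (∑ u, b u)| * ∑ u, b u :=
        sum_abs_mul_sub_mul_le _ _ (by positivity) hb
    _ ≤ 1 * ∑ v, |a v - b v| + (∑ v, |a v - b v| + |t - t'|) := by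
        gcongr
        exact abs_sub_div_sum_mul_sum_le ha hb' ht hta
    _ = 2 * ∑ v, |a v - b v| + |t - t'| := by ring

end

theorem stmt_7_general {V E : Type*} [Fintype V] [Fintype E]
    (ν : (E → ℝ) → Finset V → ℝ) (A : (E → ℝ) → V → ℝ) (D L : ℝ)
    (hνnn : ∀ w S, 0 ≤ ν w S)
    (hνlip : ∀ w w', |ν w Finset.univ - ν w' Finset.univ| ≤ ∑ e, |w e - w' e|)
    (hAnn : ∀ w v, 0 ≤ A w v)
    (hApos : ∀ w, 0 < ∑ v, A w v)
    (hub : ∀ w, ∑ v, A w v ≤ D * ν w Finset.univ)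
    (hlb : ∀ w (S : Finset V), ν w S ≤ ∑ v ∈ S, A w v)
    (hAlip : ∀ w w', ∑ v, |A w v - A w' v| ≤ L * ∑ e, |w e - w' e|) :
    (∀ w, (∀ S : Finset V, S ⊂ Finset.univ →
        (1 / D) * ν w S ≤ ∑ v ∈ S, (ν w Finset.univ / ∑ u, A w u) * A w v) ∧
      ∑ v, (ν w Finset.univ / ∑ u, A w u) * A w v = ν w Finset.univ) ∧
    (∀ w w', ∑ v, |(ν w Finset.univ / ∑ u, A w u) * A w v -
          (ν w' Finset.univ / ∑ u, A w' u) * A w' v|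
        ≤ (2 * L + 1) * ∑ e, |w e - w' e|) := by
  refine ⟨fun w => ⟨fun S _ => ?_, sum_div_sum_mul_eq _ (hApos w).ne'⟩, fun w w' => ?_⟩
  · exact one_div_mul_le_sum_div_sum_mul S (hApos w) (hνnn w _) (hνnn w S) (hlb w S) (hub w)
  · calc _ ≤ 2 * ∑ v, |A w v - A w' v| + |ν w univ - ν w' univ| :=
          sum_abs_div_sum_mul_sub_le (hAnn w') (hApos w) (hApos w') (hνnn w _) (hlb w univ)
      _ ≤ 2 * (L * ∑ e, |w e - w' e|) + ∑ e, |w e - w' e| := by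
          gcongr
          exacts [hAlip w w', hνlip w w']
      _ = (2 * L + 1) * ∑ e, |w e - w' e| := by ring

theorem stmt_7 {V E : Type*} [Fintype V] [Fintype E]
    (ν : (E → ℝ) → Finset V → ℝ) (A : (E → ℝ) → V → ℝ) (D L : ℝ)
    (hD : 1 ≤ D) (hL : 0 < L)
    (hνnn : ∀ w S, 0 ≤ ν w S)
    (hνlip : ∀ w w', |ν w Finset.univ - ν w' Finset.univ| ≤ ∑ e, |w e - w' e|)
    (hAnn : ∀ w v, 0 ≤ A w v)
    (hνpos : ∀ w, 0 < ν w Finset.univ)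
    (hApos : ∀ w, 0 < ∑ v, A w v)
    (hub : ∀ w, ∑ v, A w v ≤ D * ν w Finset.univ)
    (hlb : ∀ w (S : Finset V), ν w S ≤ ∑ v ∈ S, A w v)
    (hAlip : ∀ w w', ∑ v, |A w v - A w' v| ≤ L * ∑ e, |w e - w' e|) :
    (∀ w, (∀ S : Finset V, S ⊂ Finset.univ →
        (1 / D) * ν w S ≤ ∑ v ∈ S, (ν w Finset.univ / ∑ u, A w u) * A w v) ∧
      ∑ v, (ν w Finset.univ / ∑ u, A w u) * A w v = ν w Finset.univ) ∧
    (∀ w w', ∑ v, |(ν w Finset.univ / ∑ u, A w u) * A w v -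
          (ν w' Finset.univ / ∑ u, A w' u) * A w' v|
        ≤ (2 * L + 1) * ∑ e, |w e - w' e|) :=
  stmt_7_general ν A D L hνnn hνlip hAnn hApos hub hlb hAlip
end

section
/- Let (V, ν_w) be a family of cost allocation games parametrized by weight vectors w, with |ν(V,w) - ν(V,w')| ≤ ‖w - w'‖₁ for all w, w'. Suppose A maps each weight vector w to a vector A(w) ∈ ℝ≥0^V with ‖A(w)‖₁ ≥ ν(V,w), Σ_{v∈S} A(w)_v ≤ D·ν(S,w) for all S ⊆ V, and ‖A(w) - A(w')‖₁ ≤ L‖w - w'‖₁. Then the rescaled allocation x(w) = (ν(V,w)/‖A(w)‖₁)·A(w) lies in the D-approximate core and satisfies ‖x(w) - x(w')‖₁ ≤ (2L+1)‖w - w'‖₁ for all w, w'. -/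
theorem stmt_8 {V E : Type*} [Fintype V] [Fintype E]
    (ν : (E → ℝ) → Finset V → ℝ) (A : (E → ℝ) → V → ℝ) (D L : ℝ)
    (hD : 1 ≤ D) (hL : 0 < L)
    (hνnn : ∀ w S, 0 ≤ ν w S)
    (hνlip : ∀ w w', |ν w Finset.univ - ν w' Finset.univ| ≤ ∑ e, |w e - w' e|)
    (hAnn : ∀ w v, 0 ≤ A w v)
    (hνpos : ∀ w, 0 < ν w Finset.univ)
    (hApos : ∀ w, 0 < ∑ v, A w v)
    (hlb : ∀ w, ν w Finset.univ ≤ ∑ v, A w v)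
    (hub : ∀ w (S : Finset V), ∑ v ∈ S, A w v ≤ D * ν w S)
    (hAlip : ∀ w w', ∑ v, |A w v - A w' v| ≤ L * ∑ e, |w e - w' e|) :
    (∀ w, (∀ S : Finset V, S ⊂ Finset.univ →
        ∑ v ∈ S, (ν w Finset.univ / ∑ u, A w u) * A w v ≤ D * ν w S) ∧
      ∑ v, (ν w Finset.univ / ∑ u, A w u) * A w v = ν w Finset.univ) ∧
    (∀ w w', ∑ v, |(ν w Finset.univ / ∑ u, A w u) * A w v -
          (ν w' Finset.univ / ∑ u, A w' u) * A w' v|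
        ≤ (2 * L + 1) * ∑ e, |w e - w' e|) := by
  -- notation
  have hc_pos : ∀ w, 0 < ν w Finset.univ / ∑ u, A w u := fun w =>
    div_pos (hνpos w) (hApos w)
  have hc_le_one : ∀ w, ν w Finset.univ / ∑ u, A w u ≤ 1 := fun w =>
    (div_le_one (hApos w)).2 (hlb w)
  have hc_eff : ∀ w, (ν w Finset.univ / ∑ u, A w u) * ∑ u, A w u = ν w Finset.univ :=
    fun w => div_mul_cancel₀ _ (hApos w).ne'
  constructor
  · intro w
    set c := ν w Finset.univ / ∑ u, A w u with hc
    constructor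
    · intro S _
      have h1 : ∑ v ∈ S, c * A w v = c * ∑ v ∈ S, A w v := by
        rw [Finset.mul_sum]
      have h2 : (0:ℝ) ≤ ∑ v ∈ S, A w v := Finset.sum_nonneg fun v _ => hAnn w v
      calc ∑ v ∈ S, c * A w v = c * ∑ v ∈ S, A w v := h1
        _ ≤ 1 * ∑ v ∈ S, A w v := by
            exact mul_le_mul_of_nonneg_right (hc_le_one w) h2
        _ = ∑ v ∈ S, A w v := one_mul _
        _ ≤ D * ν w S := hub w S
    · rw [← Finset.mul_sum]
      exact hc_eff w
  · intro w w'
    set c := ν w Finset.univ / ∑ u, A w u with hc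
    set c' := ν w' Finset.univ / ∑ u, A w' u with hc'
    set d := ∑ e, |w e - w' e| with hd
    have hd0 : 0 ≤ d := Finset.sum_nonneg fun e _ => abs_nonneg _
    set S := ∑ u, A w u with hS
    set S' := ∑ u, A w' u with hS'
    have key : ∀ v, |c * A w v - c' * A w' v| ≤ c * |A w v - A w' v| + |c - c'| * A w' v := by
      intro v
      have : c * A w v - c' * A w' v = c * (A w v - A w' v) + (c - c') * A w' v := by ring
      rw [this]
      calc |c * (A w v - A w' v) + (c - c') * A w' v|
          ≤ |c * (A w v - A w' v)| + |(c - c') * A w' v| := abs_add_le _ _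
        _ = c * |A w v - A w' v| + |c - c'| * A w' v := by
            rw [abs_mul, abs_mul, abs_of_pos (hc_pos w), abs_of_nonneg (hAnn w' v)]
    have h1 : ∑ v, |c * A w v - c' * A w' v|
        ≤ c * (∑ v, |A w v - A w' v|) + |c - c'| * S' := by
      calc ∑ v, |c * A w v - c' * A w' v|
          ≤ ∑ v, (c * |A w v - A w' v| + |c - c'| * A w' v) :=
            Finset.sum_le_sum fun v _ => key v
        _ = c * (∑ v, |A w v - A w' v|) + |c - c'| * S' := by
            rw [Finset.sum_add_distrib, ← Finset.mul_sum, ← Finset.mul_sum]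
    have hΔA : ∑ v, |A w v - A w' v| ≤ L * d := hAlip w w'
    have hSS' : |S' - S| ≤ L * d := by
      calc |S' - S| = |∑ v, (A w' v - A w v)| := by rw [Finset.sum_sub_distrib]
        _ ≤ ∑ v, |A w' v - A w v| := Finset.abs_sum_le_sum_abs _ _
        _ = ∑ v, |A w v - A w' v| := by
            apply Finset.sum_congr rfl; intro v _; rw [abs_sub_comm]
        _ ≤ L * d := hΔA
    have h2 : |c - c'| * S' ≤ L * d + d := by
      have hcS : c * S = ν w Finset.univ := hc_eff w
      have hcS' : c' * S' = ν w' Finset.univ := hc_eff w'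
      have : (c - c') * S' = c * (S' - S) + (ν w Finset.univ - ν w' Finset.univ) := by
        rw [← hcS, ← hcS']; ring
      calc |c - c'| * S' = |(c - c') * S'| := by
            rw [abs_mul, abs_of_pos (hApos w')]
        _ = |c * (S' - S) + (ν w Finset.univ - ν w' Finset.univ)| := by rw [this]
        _ ≤ |c * (S' - S)| + |ν w Finset.univ - ν w' Finset.univ| := abs_add_le _ _
        _ ≤ 1 * |S' - S| + d := by
            gcongr
            · rw [abs_mul, abs_of_pos (hc_pos w)]
              exact mul_le_mul_of_nonneg_right (hc_le_one w) (abs_nonneg _)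
            · exact hνlip w w'
        _ ≤ L * d + d := by rw [one_mul]; gcongr
    calc ∑ v, |c * A w v - c' * A w' v|
        ≤ c * (∑ v, |A w v - A w' v|) + |c - c'| * S' := h1
      _ ≤ L * d + (L * d + d) := by
          refine add_le_add ?_ h2
          calc c * (∑ v, |A w v - A w' v|) ≤ 1 * (∑ v, |A w v - A w' v|) :=
              mul_le_mul_of_nonneg_right (hc_le_one w)
                (Finset.sum_nonneg fun v _ => abs_nonneg _)
            _ = ∑ v, |A w v - A w' v| := one_mul _
            _ ≤ L * d := hΔA
      _ = (2 * L + 1) * d := by ring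
end

section
/- Let T be a rooted tree with a height function h, and for a nonempty set C of leaves let conn(C) denote the minimal connected subtree of T containing all leaves in C, and lca(C) the lowest common ancestor of C. Then Σ_{u ∈ V(conn(C))} (d_{conn(C)}(u) - 1)·h_u = Σ_{(u,u') ∈ E(conn(C))} (h_u - h_{u'}) - h_{lca(C)}, where d_{conn(C)}(u) is the number of children of u in conn(C), and edges (u,u') are oriented with u the parent. -/
/-- `u` is an ancestor of `v` (possibly `u = v`) in the rooted tree with
parent function `par`. -/
def IsAnc {V : Type*} (par : V → V) (u v : V) : Prop := ∃ k, par^[k] v = u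

open Classical in
/-- Vertex set of the minimal connected subtree (Steiner subtree) of the rooted
tree containing the leaf set `C`, given that `l` is the lowest common ancestor
of `C`: the vertices lying on a path from `l` down to some leaf of `C`. -/
noncomputable def connVerts {V : Type*} [Fintype V] (par : V → V) (l : V)
    (C : Finset V) : Finset V :=
  Finset.univ.filter (fun u => IsAnc par l u ∧ ∃ c ∈ C, IsAnc par u c)

open Classical in
/-- The number of children of `u` in the Steiner subtree of `C`. -/
noncomputable def connDeg {V : Type*} [Fintype V] (par : V → V) (l : V)
    (C : Finset V) (u : V) : ℕ :=
  ((connVerts par l C).filter (fun m => par m = u ∧ m ≠ l)).card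

theorem stmt_11 {V : Type*} [Fintype V] [DecidableEq V]
    (par : V → V) (root : V) (h : V → ℝ)
    (hroot : par root = root) (hwf : ∀ v, ∃ k, par^[k] v = root)
    (hfix : ∀ v, par v = v → v = root)
    (C : Finset V) (hC : C.Nonempty)
    (hleaf : ∀ c ∈ C, ∀ v, par v = c → v = c)
    (l : V) (hanc : ∀ c ∈ C, IsAnc par l c)
    (hlca : ∀ u, (∀ c ∈ C, IsAnc par u c) → IsAnc par u l) :
    ∑ u ∈ connVerts par l C, ((connDeg par l C u : ℝ) - 1) * h u
      = (∑ m ∈ (connVerts par l C).filter (fun m => m ≠ l), (h (par m) - h m))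
          - h l := by
  classical
  set S := connVerts par l C with hS
  have hlS : l ∈ S := by
    obtain ⟨c, hc⟩ := hC
    simp only [hS, connVerts, Finset.mem_filter, Finset.mem_univ, true_and]
    exact ⟨⟨0, rfl⟩, c, hc, hanc c hc⟩
  have hpar : ∀ m ∈ S, m ≠ l → par m ∈ S := by
    intro m hm hml
    simp only [hS, connVerts, Finset.mem_filter, Finset.mem_univ, true_and] at hm ⊢
    obtain ⟨⟨k, hk⟩, c, hc, j, hj⟩ := hm
    refine ⟨?_, c, hc, j + 1, ?_⟩
    · cases k with
      | zero => simp only [Function.iterate_zero, id] at hk; exact absurd hk hml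
      | succ k => exact ⟨k, by rwa [Function.iterate_succ_apply] at hk⟩
    · rw [Function.iterate_succ_apply', hj]
  have key : ∑ u ∈ S, (connDeg par l C u : ℝ) * h u
      = ∑ m ∈ S.filter (fun m => m ≠ l), h (par m) := by
    rw [← Finset.sum_fiberwise_of_maps_to (g := par) (t := S)
      (fun m hm => hpar m (Finset.mem_filter.mp hm).1 (Finset.mem_filter.mp hm).2)
      (fun m => h (par m))]
    apply Finset.sum_congr rfl
    intro u _
    rw [Finset.filter_filter]
    have heq : ∀ m ∈ S.filter (fun m => m ≠ l ∧ par m = u), h (par m) = h u := by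
      intro m hm
      rw [(Finset.mem_filter.mp hm).2.2]
    rw [Finset.sum_congr rfl heq, Finset.sum_const, nsmul_eq_mul]
    congr 2
    unfold connDeg
    rw [← hS]
    congr 1
    ext m
    simp [and_comm]
  have hfl : S.filter (fun m => ¬ m ≠ l) = {l} := by
    ext x
    simp only [Finset.mem_filter, not_not, Finset.mem_singleton]
    constructor
    · rintro ⟨_, hx⟩; exact hx
    · rintro rfl; exact ⟨hlS, rfl⟩
  have split : ∑ m ∈ S.filter (fun m => m ≠ l), h m = ∑ m ∈ S, h m - h l := by
    have := Finset.sum_filter_add_sum_filter_not S (fun m => m ≠ l) h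
    rw [hfl, Finset.sum_singleton] at this
    linarith
  calc ∑ u ∈ S, ((connDeg par l C u : ℝ) - 1) * h u
      = ∑ u ∈ S, ((connDeg par l C u : ℝ) * h u) - ∑ u ∈ S, h u := by
        rw [← Finset.sum_sub_distrib]
        apply Finset.sum_congr rfl
        intro u _
        ring
    _ = ∑ m ∈ S.filter (fun m => m ≠ l), h (par m) - ∑ u ∈ S, h u := by rw [key]
    _ = (∑ m ∈ S.filter (fun m => m ≠ l), (h (par m) - h m)) - h l := by
        rw [Finset.sum_sub_distrib, split]
        ring
end

section
/- Let G = (V ∪ {r}, E) be a connected graph with nonnegative edge weights w, let w' = w + δ·1_f for some edge f and δ > 0, and let v ∈ V and S ⊆ V with both endpoints of f in S ∪ {r} and v ∉ S. Then OPT(S ∪ {v,r}, w') - OPT(S ∪ {v,r}, w) ≤ OPT(S ∪ {r}, w') - OPT(S ∪ {r}, w), where OPT(X, u) denotes the minimum weight of a spanning tree of the induced subgraph G[X] with respect to weights u. -/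
/-- `a` and `b` are connected using the (oriented representatives of) edges in `F`. -/
def EdgeConn {U : Type*} (F : Finset (U × U)) (a b : U) : Prop :=
  Relation.ReflTransGen (fun x y => (x, y) ∈ F ∨ (y, x) ∈ F) a b

/-- `F` is the edge set of a spanning tree of the subgraph of `(U, Es)` induced
by the vertex set `X`. -/
def IsSpanningTree {U : Type*} (Es : Finset (U × U)) (X : Finset U)
    (F : Finset (U × U)) : Prop :=
  F ⊆ Es ∧ (∀ e ∈ F, e.1 ∈ X ∧ e.2 ∈ X) ∧
    (∀ a ∈ X, ∀ b ∈ X, EdgeConn F a b) ∧ F.card + 1 = X.card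

/-- Minimum weight of a spanning tree of the induced subgraph on `X`. -/
noncomputable def OPT {U : Type*} (Es : Finset (U × U)) (X : Finset U)
    (w : U × U → ℝ) : ℝ :=
  sInf {t | ∃ F, IsSpanningTree Es X F ∧ t = ∑ e ∈ F, w e}

set_option linter.unusedSectionVars false
set_option maxHeartbeats 1000000

namespace MSTAux

variable {U : Type*} [DecidableEq U]

lemma econn_refl {F : Finset (U × U)} (a : U) : EdgeConn F a a := Relation.ReflTransGen.refl

lemma econn_trans {F : Finset (U × U)} {a b c : U} (h1 : EdgeConn F a b) (h2 : EdgeConn F b c) :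
    EdgeConn F a c := Relation.ReflTransGen.trans h1 h2

lemma econn_mono {F F' : Finset (U × U)} (h : F ⊆ F') {a b : U} (hc : EdgeConn F a b) :
    EdgeConn F' a b := by
  induction hc with
  | refl => exact .refl
  | tail _ hstep ih => exact ih.tail (hstep.imp (h ·) (h ·))

lemma econn_symm {F : Finset (U × U)} {a b : U} (hc : EdgeConn F a b) : EdgeConn F b a := by
  induction hc with
  | refl => exact .refl
  | @tail b c hab hstep ih =>
    have h1 : EdgeConn F c b := Relation.ReflTransGen.single (Or.symm hstep)
    exact h1.trans ih

lemma econn_pres {G : Finset (U × U)} (P : U → Prop) (hG : ∀ e ∈ G, (P e.1 ↔ P e.2))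
    {a b : U} (hc : EdgeConn G a b) : P a ↔ P b := by
  induction hc with
  | refl => rfl
  | tail _ hstep ih =>
    rcases hstep with h | h
    · exact ih.trans (hG _ h)
    · exact ih.trans (hG _ h).symm

lemma exists_crossing {F : Finset (U × U)} (P : U → Prop) {a b : U}
    (hc : EdgeConn F a b) (ha : P a) (hb : ¬ P b) :
    ∃ e ∈ F, ¬ (P e.1 ↔ P e.2) := by
  by_contra hno
  push_neg at hno
  exact hb ((econn_pres P hno hc).mp ha)

/-- walks stay inside the component of the basepoint `p`. -/
lemma econn_filter {G H : Finset (U × U)} {p z z' : U}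
    (hH : ∀ e ∈ G, EdgeConn G p e.1 → e ∈ H)
    (hpz : EdgeConn G p z) (hzz : EdgeConn G z z') : EdgeConn H z z' := by
  induction hzz with
  | refl => exact .refl
  | @tail c d hzc hstep ih =>
    refine ih.tail ?_
    rcases hstep with h | h
    · exact Or.inl (hH _ h (hpz.trans hzc))
    · exact Or.inr (hH _ h ((hpz.trans hzc).tail (Or.inr h)))

lemma econn_insert {G : Finset (U × U)} {x y a b : U}
    (hc : EdgeConn (insert (x, y) G) a b) :
    EdgeConn G a b ∨ ((EdgeConn G a x ∨ EdgeConn G a y) ∧ (EdgeConn G b x ∨ EdgeConn G b y)) := by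
  induction hc with
  | refl => exact Or.inl .refl
  | @tail c d hac hstep ih =>
    have hstep' : ((c, d) = (x, y) ∨ (c, d) ∈ G) ∨ ((d, c) = (x, y) ∨ (d, c) ∈ G) := by
      rcases hstep with h | h
      · exact Or.inl (Finset.mem_insert.1 h)
      · exact Or.inr (Finset.mem_insert.1 h)
    rcases hstep' with (he | hG) | (he | hG)
    · obtain ⟨hcx, hdy⟩ := Prod.mk.injEq .. ▸ he
      subst hcx; subst hdy
      refine Or.inr ⟨?_, Or.inr .refl⟩
      rcases ih with h1 | ⟨h2, _⟩
      · exact Or.inl h1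
      · exact h2
    · rcases ih with h1 | ⟨h2, h3⟩
      · exact Or.inl (h1.tail (Or.inl hG))
      · refine Or.inr ⟨h2, ?_⟩
        have hdc : EdgeConn G d c := Relation.ReflTransGen.single (Or.inr hG)
        exact h3.imp hdc.trans hdc.trans
    · obtain ⟨hdx, hcy⟩ := Prod.mk.injEq .. ▸ he
      subst hdx; subst hcy
      refine Or.inr ⟨?_, Or.inl .refl⟩
      rcases ih with h1 | ⟨h2, _⟩
      · exact Or.inr h1
      · exact h2
    · rcases ih with h1 | ⟨h2, h3⟩
      · exact Or.inl (h1.tail (Or.inr hG))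
      · refine Or.inr ⟨h2, ?_⟩
        have hdc : EdgeConn G d c := Relation.ReflTransGen.single (Or.inl hG)
        exact h3.imp hdc.trans hdc.trans


lemma econn_empty {a b : U} (hc : EdgeConn (∅ : Finset (U × U)) a b) : a = b := by
  induction hc with
  | refl => rfl
  | tail _ hstep ih => rcases hstep with h | h <;> simp at h

/-- A connected vertex set needs at least `|X| - 1` edges. -/
lemma card_le_of_conn :
    ∀ (n : ℕ) (F : Finset (U × U)) (X : Finset U), F.card = n →
      (∀ a ∈ X, ∀ b ∈ X, EdgeConn F a b) → X.card ≤ F.card + 1 := by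
  intro n
  induction n using Nat.strong_induction_on with
  | _ n ih =>
    intro F X hcard hconn
    rcases le_or_gt X.card 1 with hX | hX
    · omega
    rcases F.eq_empty_or_nonempty with rfl | ⟨e, heF⟩
    · obtain ⟨a, ha, b, hb, hab⟩ := Finset.one_lt_card.1 hX
      exact absurd (econn_empty (hconn a ha b hb)) hab
    · set g : U → U := fun z => if z = e.2 then e.1 else z with hg
      set F' : Finset (U × U) := (F.erase e).image (fun p => (g p.1, g p.2)) with hF'
      have hge : g e.1 = g e.2 := by
        simp only [hg]
        by_cases h12 : e.1 = e.2 <;> simp [h12]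
      have hproj : ∀ a b : U, EdgeConn F a b → EdgeConn F' (g a) (g b) := by
        intro a b hab
        induction hab with
        | refl => exact .refl
        | @tail c d _ hstep ih2 =>
          rcases hstep with h | h
          · by_cases hce : (c, d) = e
            · have : g c = g d := by
                have h1 : c = e.1 := by rw [← hce]
                have h2 : d = e.2 := by rw [← hce]
                rw [h1, h2, hge]
              rwa [← this]
            · refine ih2.tail (Or.inl ?_)
              exact Finset.mem_image.2 ⟨(c, d), Finset.mem_erase.2 ⟨hce, h⟩, rfl⟩
          · by_cases hce : (d, c) = e
            · have : g c = g d := by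
                have h1 : d = e.1 := by rw [← hce]
                have h2 : c = e.2 := by rw [← hce]
                rw [h1, h2, hge]
              rwa [← this]
            · refine ih2.tail (Or.inr ?_)
              exact Finset.mem_image.2 ⟨(d, c), Finset.mem_erase.2 ⟨hce, h⟩, rfl⟩
      have hF'card : F'.card < n := by
        have h1 : F'.card ≤ (F.erase e).card := Finset.card_image_le
        have h2 : (F.erase e).card = F.card - 1 := Finset.card_erase_of_mem heF
        have h3 : 0 < F.card := Finset.card_pos.2 ⟨e, heF⟩
        omega
      have hconn' : ∀ a ∈ X.image g, ∀ b ∈ X.image g, EdgeConn F' a b := by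
        intro a ha b hb
        obtain ⟨a0, ha0, rfl⟩ := Finset.mem_image.1 ha
        obtain ⟨b0, hb0, rfl⟩ := Finset.mem_image.1 hb
        exact hproj _ _ (hconn _ ha0 _ hb0)
      have hIH := ih F'.card hF'card F' (X.image g) rfl hconn'
      have hXsub : X.erase e.2 ⊆ X.image g := by
        intro z hz
        obtain ⟨hz2, hzX⟩ := Finset.mem_erase.1 hz
        exact Finset.mem_image.2 ⟨z, hzX, by simp [hg, hz2]⟩
      have := Finset.card_le_card hXsub
      have h4 : (X.erase e.2).card ≥ X.card - 1 := by
        rcases Finset.decidableMem e.2 X with h | h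
        · simp [Finset.card_erase_of_mem, *]
        · simp [Finset.card_erase_of_mem h]
      omega


lemma econn_insert' {F : Finset (U × U)} {h : U × U} (hhF : h ∈ F) {a b : U}
    (hc : EdgeConn F a b) :
    EdgeConn (F.erase h) a b ∨
      ((EdgeConn (F.erase h) a h.1 ∨ EdgeConn (F.erase h) a h.2) ∧
        (EdgeConn (F.erase h) b h.1 ∨ EdgeConn (F.erase h) b h.2)) := by
  have : F = insert (h.1, h.2) (F.erase h) := by
    rw [Prod.mk.eta, Finset.insert_erase hhF]
  rw [this] at hc
  exact econn_insert hc

/-- every edge of a spanning tree is a bridge -/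
lemma not_conn_erase {F : Finset (U × U)} {X : Finset U}
    (hconn : ∀ a ∈ X, ∀ b ∈ X, EdgeConn F a b) (hcard : F.card + 1 = X.card)
    {h : U × U} (hhF : h ∈ F) :
    ¬ EdgeConn (F.erase h) h.1 h.2 := by
  intro hcon
  have hconn' : ∀ a ∈ X, ∀ b ∈ X, EdgeConn (F.erase h) a b := by
    intro a ha b hb
    rcases econn_insert' hhF (hconn a ha b hb) with h1 | ⟨h2, h3⟩
    · exact h1
    · have ha1 : EdgeConn (F.erase h) a h.1 := by
        rcases h2 with h2 | h2
        · exact h2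
        · exact h2.trans (econn_symm hcon)
      have hb1 : EdgeConn (F.erase h) b h.1 := by
        rcases h3 with h3 | h3
        · exact h3
        · exact h3.trans (econn_symm hcon)
      exact ha1.trans (econn_symm hb1)
  have := card_le_of_conn (F.erase h).card (F.erase h) X rfl hconn'
  have h2 : (F.erase h).card = F.card - 1 := Finset.card_erase_of_mem hhF
  have h3 : 0 < F.card := Finset.card_pos.2 ⟨h, hhF⟩
  omega

/-- two sides: every vertex connected to `h.1` lies in the component of `h.1` or `h.2`. -/
lemma two_sides {F : Finset (U × U)} {h : U × U} (hhF : h ∈ F) {z : U}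
    (hc : EdgeConn F z h.1) :
    EdgeConn (F.erase h) z h.1 ∨ EdgeConn (F.erase h) z h.2 := by
  rcases econn_insert' hhF hc with h1 | ⟨h2, _⟩
  · exact Or.inl h1
  · exact h2

/-- Key lemma: there is a crossing edge of `F` (w.r.t. `P`) whose removal separates `p` from `q`. -/
lemma exists_sep_crossing :
    ∀ (n : ℕ) (F : Finset (U × U)) (X : Finset U) (P : U → Prop) (p q : U), F.card = n →
      (∀ a ∈ X, ∀ b ∈ X, EdgeConn F a b) → (∀ e ∈ F, e.1 ∈ X ∧ e.2 ∈ X) →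
      F.card + 1 = X.card → p ∈ X → q ∈ X → P p → ¬ P q →
      ∃ h ∈ F, ¬ (P h.1 ↔ P h.2) ∧ ¬ EdgeConn (F.erase h) p q := by
  intro n
  induction n using Nat.strong_induction_on with
  | _ n ih =>
    intro F X P p q hn hconn hend hcard hp hq hPp hPq
    classical
    obtain ⟨h, hhF, hcross⟩ := exists_crossing P (hconn p hp q hq) hPp hPq
    by_cases hsep : EdgeConn (F.erase h) p q
    swap
    · exact ⟨h, hhF, hcross, hsep⟩
    set G := F.erase h with hG
    have hbr : ¬ EdgeConn G h.1 h.2 := not_conn_erase hconn hcard hhF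
    have key : ∀ z ∈ X, EdgeConn G z h.1 ∨ EdgeConn G z h.2 := fun z hz =>
      two_sides hhF (hconn z hz h.1 (hend h hhF).1)
    -- p connects to exactly one endpoint c of h; c' is the other endpoint
    have main : ∀ c c' : U,
        ((c = h.1 ∧ c' = h.2) ∨ (c = h.2 ∧ c' = h.1)) → ¬ EdgeConn G c c' →
        (∀ z ∈ X, EdgeConn G z c ∨ EdgeConn G z c') → EdgeConn G p c →
        ∃ h' ∈ F, ¬ (P h'.1 ↔ P h'.2) ∧ ¬ EdgeConn (F.erase h') p q := by
      intro c c' hor hncc key' hpc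
      have hnpc' : ¬ EdgeConn G p c' := fun hx => hncc ((econn_symm hpc).trans hx)
      -- split into the two components
      set X1 := X.filter (fun z => EdgeConn G p z) with hX1
      set X2 := X.filter (fun z => ¬ EdgeConn G p z) with hX2
      set F1 := G.filter (fun e => EdgeConn G p e.1) with hF1
      set F2 := G.filter (fun e => ¬ EdgeConn G p e.1) with hF2
      have hGsub : G ⊆ F := Finset.erase_subset _ _
      have hconn1 : ∀ a ∈ X1, ∀ b ∈ X1, EdgeConn F1 a b := by
        intro a ha b hb
        obtain ⟨haX, hpa⟩ := Finset.mem_filter.1 ha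
        obtain ⟨hbX, hpb⟩ := Finset.mem_filter.1 hb
        exact econn_filter (fun e he hpe => Finset.mem_filter.2 ⟨he, hpe⟩) hpa
          ((econn_symm hpa).trans hpb)
      have hc'z : ∀ z ∈ X2, EdgeConn G c' z := by
        intro z hz
        obtain ⟨hzX, hpz⟩ := Finset.mem_filter.1 hz
        rcases key' z hzX with h1 | h1
        · exact absurd (hpc.trans (econn_symm h1)) hpz
        · exact econn_symm h1
      have hconn2 : ∀ a ∈ X2, ∀ b ∈ X2, EdgeConn F2 a b := by
        intro a ha b hb
        have hHH : ∀ e ∈ G, EdgeConn G c' e.1 → e ∈ F2 := by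
          intro e he hce
          refine Finset.mem_filter.2 ⟨he, fun hpe => hnpc' ?_⟩
          exact hpe.trans (econn_symm hce)
        exact econn_filter hHH (hc'z a ha) ((econn_symm (hc'z a ha)).trans (hc'z b hb))
      have hend1 : ∀ e ∈ F1, e.1 ∈ X1 ∧ e.2 ∈ X1 := by
        intro e he
        obtain ⟨heG, hpe⟩ := Finset.mem_filter.1 he
        have he2 : EdgeConn G p e.2 := hpe.tail (Or.inl heG)
        exact ⟨Finset.mem_filter.2 ⟨(hend e (hGsub heG)).1, hpe⟩,
          Finset.mem_filter.2 ⟨(hend e (hGsub heG)).2, he2⟩⟩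
      have hend2 : ∀ e ∈ F2, e.1 ∈ X2 ∧ e.2 ∈ X2 := by
        intro e he
        obtain ⟨heG, hpe⟩ := Finset.mem_filter.1 he
        have he2 : ¬ EdgeConn G p e.2 := fun hx => hpe (hx.tail (Or.inr heG))
        exact ⟨Finset.mem_filter.2 ⟨(hend e (hGsub heG)).1, hpe⟩,
          Finset.mem_filter.2 ⟨(hend e (hGsub heG)).2, he2⟩⟩
      have hXc : X1.card + X2.card = X.card := Finset.card_filter_add_card_filter_not _
      have hFc : F1.card + F2.card = G.card := Finset.card_filter_add_card_filter_not _
      have hGc : G.card = F.card - 1 := Finset.card_erase_of_mem hhF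
      have hFpos : 0 < F.card := Finset.card_pos.2 ⟨h, hhF⟩
      have hb1 := card_le_of_conn F1.card F1 X1 rfl hconn1
      have hb2 := card_le_of_conn F2.card F2 X2 rfl hconn2
      have hcard1 : F1.card + 1 = X1.card := by omega
      have hF1lt : F1.card < n := by
        have : F1.card ≤ G.card := Finset.card_le_card (Finset.filter_subset _ _)
        omega
      have hpX1 : p ∈ X1 := Finset.mem_filter.2 ⟨hp, .refl⟩
      have hqX1 : q ∈ X1 := Finset.mem_filter.2 ⟨hq, hsep⟩
      obtain ⟨h', h'F1, h'cross, h'sep⟩ :=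
        ih F1.card hF1lt F1 X1 P p q rfl hconn1 hend1 hcard1 hpX1 hqX1 hPp hPq
      obtain ⟨h'G, hph'⟩ := Finset.mem_filter.1 h'F1
      refine ⟨h', hGsub h'G, h'cross, fun hcon => ?_⟩
      -- project a p-q connection in F.erase h' down to F1.erase h'
      have hne : h ≠ h' := fun hx => (Finset.mem_erase.1 h'G).1 hx.symm
      have hrw : F.erase h' = insert (h.1, h.2) (G.erase h') := by
        rw [Prod.mk.eta, hG, Finset.erase_right_comm, Finset.insert_erase
          (Finset.mem_erase.2 ⟨hne, hhF⟩)]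
      rw [hrw] at hcon
      set G' := G.erase h' with hG'
      have hG'sub : G' ⊆ G := Finset.erase_subset _ _
      have hcc' : ∀ z : U, (EdgeConn G' z h.1 ∨ EdgeConn G' z h.2) ↔
          (EdgeConn G' z c ∨ EdgeConn G' z c') := by
        intro z; rcases hor with ⟨rfl, rfl⟩ | ⟨rfl, rfl⟩
        · rfl
        · exact or_comm
      have hGpres : ∀ e ∈ G', (EdgeConn G p e.1 ↔ EdgeConn G p e.2) := by
        intro e he
        constructor
        · intro hx; exact hx.tail (Or.inl (hG'sub he))
        · intro hx; exact hx.tail (Or.inr (hG'sub he))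
      have hGpq : EdgeConn G' p q := by
        rcases econn_insert hcon with h1 | ⟨h2, h3⟩
        · exact h1
        · have hp2 : EdgeConn G' p c := by
            rcases (hcc' p).1 h2 with hx | hx
            · exact hx
            · exact absurd (econn_mono hG'sub hx) hnpc'
          have hq2 : EdgeConn G' q c := by
            rcases (hcc' q).1 h3 with hx | hx
            · exact hx
            · exfalso
              have : EdgeConn G p c' :=
                hsep.trans (econn_mono hG'sub hx)
              exact hnpc' this
          exact hp2.trans (econn_symm hq2)
      have hfin : EdgeConn (F1.erase h') p q := by
        refine econn_filter (G := G') (fun e he hpe => ?_) (Relation.ReflTransGen.refl) hGpq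
        obtain ⟨heh', heG⟩ := Finset.mem_erase.1 he
        exact Finset.mem_erase.2 ⟨heh', Finset.mem_filter.2 ⟨heG, econn_mono hG'sub hpe⟩⟩
      exact h'sep hfin
    have hh1X : h.1 ∈ X := (hend h hhF).1
    have hh2X : h.2 ∈ X := (hend h hhF).2
    rcases key p hp with hpc | hpc
    · exact main h.1 h.2 (Or.inl ⟨rfl, rfl⟩) hbr key hpc
    · exact main h.2 h.1 (Or.inr ⟨rfl, rfl⟩) (fun hx => hbr (econn_symm hx))
        (fun z hz => (key z hz).symm) hpc


lemma exchange {Es : Finset (U × U)} {X X' : Finset U} (hXX' : X ⊆ X')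
    (w : U × U → ℝ) {A B : Finset (U × U)} {f : U × U}
    (hA : IsSpanningTree Es X A) (hB : IsSpanningTree Es X' B)
    (hfB : f ∈ B) (hfA : f ∉ A) (hf1 : f.1 ∈ X) (hf2 : f.2 ∈ X) :
    ∃ A' B'', IsSpanningTree Es X' A' ∧ IsSpanningTree Es X B'' ∧ f ∉ A' ∧
      (∑ e ∈ A', w e) + (∑ e ∈ B'', w e) = (∑ e ∈ A, w e) + (∑ e ∈ B, w e) := by
  obtain ⟨hAsub, hAend, hAconn, hAcard⟩ := hA
  obtain ⟨hBsub, hBend, hBconn, hBcard⟩ := hB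
  set side : U → Prop := fun z => EdgeConn (B.erase f) f.1 z with hside
  have hbrB : ¬ EdgeConn (B.erase f) f.1 f.2 := not_conn_erase hBconn hBcard hfB
  obtain ⟨h, hhA, hcross, hsep⟩ := exists_sep_crossing A.card A X side f.1 f.2 rfl
    hAconn hAend hAcard hf1 hf2 (Relation.ReflTransGen.refl) hbrB
  have hh1X : h.1 ∈ X := (hAend h hhA).1
  have hh2X : h.2 ∈ X := (hAend h hhA).2
  have hhf : h ≠ f := fun hx => hfA (hx ▸ hhA)
  have hhB : h ∉ B.erase f := by
    intro hmem
    refine hcross ⟨fun hs => hs.tail (Or.inl hmem), fun hs => hs.tail (Or.inr hmem)⟩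
  -- every vertex of X' is on one of the two sides of B - f
  have keyB : ∀ z ∈ X', EdgeConn (B.erase f) z f.1 ∨ EdgeConn (B.erase f) z f.2 :=
    fun z hz => two_sides hfB (hBconn z hz f.1 (hXX' hf1))
  have hBside : ∀ z ∈ X', ¬ side z → EdgeConn (B.erase f) z f.2 := by
    intro z hz hnz
    rcases keyB z hz with h1 | h1
    · exact absurd (econn_symm h1) hnz
    · exact h1
  -- one endpoint of h is on each side of B - f
  have hhor : (side h.1 ∧ EdgeConn (B.erase f) h.2 f.2) ∨
      (side h.2 ∧ EdgeConn (B.erase f) h.1 f.2) := by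
    by_cases hs1 : side h.1
    · have hs2 : ¬ side h.2 := fun hs2 => hcross ⟨fun _ => hs2, fun _ => hs1⟩
      exact Or.inl ⟨hs1, hBside h.2 (hXX' hh2X) hs2⟩
    · have hs2 : side h.2 := by
        by_contra hs2
        exact hcross ⟨fun hx => absurd hx hs1, fun hx => absurd hx hs2⟩
      exact Or.inr ⟨hs2, hBside h.1 (hXX' hh1X) hs1⟩
  -- sides of A - h for f.1, f.2
  have hbrA : ¬ EdgeConn (A.erase h) h.1 h.2 := not_conn_erase hAconn hAcard hhA
  have keyA : ∀ z ∈ X, EdgeConn (A.erase h) z h.1 ∨ EdgeConn (A.erase h) z h.2 :=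
    fun z hz => two_sides hhA (hAconn z hz h.1 hh1X)
  have hopp : (EdgeConn (A.erase h) f.1 h.1 ∧ EdgeConn (A.erase h) f.2 h.2) ∨
      (EdgeConn (A.erase h) f.1 h.2 ∧ EdgeConn (A.erase h) f.2 h.1) := by
    rcases keyA f.1 hf1 with h1 | h1 <;> rcases keyA f.2 hf2 with h2 | h2
    · exact absurd (h1.trans (econn_symm h2)) hsep
    · exact Or.inl ⟨h1, h2⟩
    · exact Or.inr ⟨h1, h2⟩
    · exact absurd (h1.trans (econn_symm h2)) hsep
  set A' := insert h (B.erase f) with hA'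
  set B'' := insert f (A.erase h) with hB''
  have hhA' : h ∈ A' := Finset.mem_insert_self _ _
  have hfB'' : f ∈ B'' := Finset.mem_insert_self _ _
  have hBfA' : B.erase f ⊆ A' := Finset.subset_insert _ _
  have hAhB'' : A.erase h ⊆ B'' := Finset.subset_insert _ _
  have hstepA' : EdgeConn A' h.1 h.2 := Relation.ReflTransGen.single (Or.inl (by
    rw [Prod.mk.eta]; exact hhA'))
  have hstepB'' : EdgeConn B'' f.1 f.2 := Relation.ReflTransGen.single (Or.inl (by
    rw [Prod.mk.eta]; exact hfB''))
  refine ⟨A', B'', ⟨?_, ?_, ?_, ?_⟩, ⟨?_, ?_, ?_, ?_⟩, ?_, ?_⟩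
  · -- A' ⊆ Es
    intro e he
    rcases Finset.mem_insert.1 he with rfl | he
    · exact hAsub hhA
    · exact hBsub (Finset.erase_subset _ _ he)
  · -- endpoints in X'
    intro e he
    rcases Finset.mem_insert.1 he with rfl | he
    · exact ⟨hXX' hh1X, hXX' hh2X⟩
    · exact hBend e (Finset.erase_subset _ _ he)
  · -- connectivity of A'
    have hf2f1 : EdgeConn A' f.2 f.1 := by
      rcases hhor with ⟨hs1, hs2⟩ | ⟨hs1, hs2⟩
      · -- f.2 ~ h.2 - h - h.1 ~ f.1
        exact (econn_symm (econn_mono hBfA' hs2)).trans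
          ((econn_symm hstepA').trans (econn_symm (econn_mono hBfA' hs1)))
      · exact (econn_symm (econn_mono hBfA' hs2)).trans
          (hstepA'.trans (econn_symm (econn_mono hBfA' hs1)))
    have hall : ∀ z ∈ X', EdgeConn A' z f.1 := by
      intro z hz
      rcases keyB z hz with h1 | h1
      · exact econn_mono hBfA' h1
      · exact (econn_mono hBfA' h1).trans hf2f1
    intro a ha b hb
    exact (hall a ha).trans (econn_symm (hall b hb))
  · -- card of A'
    rw [Finset.card_insert_of_notMem hhB, Finset.card_erase_of_mem hfB]
    have : 0 < B.card := Finset.card_pos.2 ⟨f, hfB⟩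
    omega
  · -- B'' ⊆ Es
    intro e he
    rcases Finset.mem_insert.1 he with rfl | he
    · exact hBsub hfB
    · exact hAsub (Finset.erase_subset _ _ he)
  · -- endpoints in X
    intro e he
    rcases Finset.mem_insert.1 he with rfl | he
    · exact ⟨hf1, hf2⟩
    · exact hAend e (Finset.erase_subset _ _ he)
  · -- connectivity of B''
    have hh2h1 : EdgeConn B'' h.2 h.1 := by
      rcases hopp with ⟨hs1, hs2⟩ | ⟨hs1, hs2⟩
      · exact (econn_symm (econn_mono hAhB'' hs2)).trans
          ((econn_symm hstepB'').trans (econn_mono hAhB'' hs1))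
      · exact (econn_symm (econn_mono hAhB'' hs1)).trans
          (hstepB''.trans (econn_mono hAhB'' hs2))
    have hall : ∀ z ∈ X, EdgeConn B'' z h.1 := by
      intro z hz
      rcases keyA z hz with h1 | h1
      · exact econn_mono hAhB'' h1
      · exact (econn_mono hAhB'' h1).trans hh2h1
    intro a ha b hb
    exact (hall a ha).trans (econn_symm (hall b hb))
  · -- card of B''
    have hfAh : f ∉ A.erase h := fun hx => hfA (Finset.erase_subset _ _ hx)
    rw [Finset.card_insert_of_notMem hfAh, Finset.card_erase_of_mem hhA]
    have : 0 < A.card := Finset.card_pos.2 ⟨h, hhA⟩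
    omega
  · -- f ∉ A'
    intro hx
    rcases Finset.mem_insert.1 hx with hx | hx
    · exact hhf hx.symm
    · exact (Finset.mem_erase.1 hx).1 rfl
  · -- weight identity
    have hfAh : f ∉ A.erase h := fun hx => hfA (Finset.erase_subset _ _ hx)
    rw [Finset.sum_insert hhB, Finset.sum_insert hfAh]
    have h1 : ∑ e ∈ B.erase f, w e = (∑ e ∈ B, w e) - w f := by
      have := Finset.sum_erase_add B w hfB
      linarith
    have h2 : ∑ e ∈ A.erase h, w e = (∑ e ∈ A, w e) - w h := by
      have := Finset.sum_erase_add A w hhA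
      linarith
    rw [h1, h2]; ring


lemma opt_spec [Fintype U] (Es : Finset (U × U)) (X : Finset U) (w : U × U → ℝ)
    (hne : ∃ F, IsSpanningTree Es X F) :
    (∃ F, IsSpanningTree Es X F ∧ OPT Es X w = ∑ e ∈ F, w e) ∧
    (∀ F, IsSpanningTree Es X F → OPT Es X w ≤ ∑ e ∈ F, w e) := by
  classical
  set T : Set ℝ := {t | ∃ F, IsSpanningTree Es X F ∧ t = ∑ e ∈ F, w e} with hT
  have hTeq : T = (fun F : Finset (U × U) => ∑ e ∈ F, w e) '' {F | IsSpanningTree Es X F} := by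
    ext t
    constructor
    · rintro ⟨F, hF, rfl⟩
      exact ⟨F, hF, rfl⟩
    · rintro ⟨F, hF, rfl⟩
      exact ⟨F, hF, rfl⟩
  have hfin : T.Finite := by
    rw [hTeq]
    exact (Set.toFinite _).image _
  have hne' : T.Nonempty := by
    obtain ⟨F, hF⟩ := hne
    exact ⟨_, F, hF, rfl⟩
  have hmem : sInf T ∈ T := hne'.csInf_mem hfin
  constructor
  · obtain ⟨F, hF, hFe⟩ := hmem
    exact ⟨F, hF, hFe⟩
  · intro F hF
    exact csInf_le hfin.bddBelow ⟨F, hF, rfl⟩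


end MSTAux

open MSTAux in
theorem stmt_12 {U : Type*} [Fintype U] [DecidableEq U]
    (Es : Finset (U × U)) (w : U × U → ℝ) (hw : ∀ e, 0 ≤ w e)
    (f : U × U) (hf : f ∈ Es) (δ : ℝ) (hδ : 0 < δ)
    (r v : U) (S : Finset U) (hvS : v ∉ S) (hvr : v ≠ r)
    (hf1 : f.1 ∈ insert r S) (hf2 : f.2 ∈ insert r S)
    (hconn1 : ∃ F, IsSpanningTree Es (insert r S) F)
    (hconn2 : ∃ F, IsSpanningTree Es (insert v (insert r S)) F) :
    OPT Es (insert v (insert r S)) (fun e => if e = f then w e + δ else w e)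
        - OPT Es (insert v (insert r S)) w
      ≤ OPT Es (insert r S) (fun e => if e = f then w e + δ else w e)
        - OPT Es (insert r S) w := by
  classical
  set X : Finset U := insert r S with hX
  set X' : Finset U := insert v (insert r S) with hX'
  set w' : U × U → ℝ := fun e => if e = f then w e + δ else w e with hw'
  have hXX' : X ⊆ X' := Finset.subset_insert _ _
  have hws : ∀ F : Finset (U × U), ∑ e ∈ F, w' e =
      (∑ e ∈ F, w e) + (if f ∈ F then δ else 0) := by
    intro F
    have : ∀ e ∈ F, w' e = w e + (if e = f then δ else 0) := by
      intro e _
      by_cases he : e = f <;> simp [hw', he]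
    rw [Finset.sum_congr rfl this, Finset.sum_add_distrib, Finset.sum_ite_eq' F f (fun _ => δ)]
  obtain ⟨⟨B, hB, hBval⟩, hBle⟩ := opt_spec Es X' w hconn2
  obtain ⟨⟨A, hA, hAval⟩, hAle⟩ := opt_spec Es X w' hconn1
  obtain ⟨⟨_, _, _⟩, hB'le⟩ := opt_spec Es X' w' hconn2
  obtain ⟨⟨_, _, _⟩, hA'le⟩ := opt_spec Es X w hconn1
  by_cases hfB : f ∈ B
  · by_cases hfA : f ∈ A
    · -- both contain f : LHS ≤ δ ≤ RHS
      have h1 : OPT Es X' w' ≤ ∑ e ∈ B, w' e := hB'le B hB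
      have h2 : ∑ e ∈ B, w' e = (∑ e ∈ B, w e) + δ := by rw [hws]; simp [hfB]
      have h3 : ∑ e ∈ A, w' e = (∑ e ∈ A, w e) + δ := by rw [hws]; simp [hfA]
      have h4 : OPT Es X w ≤ ∑ e ∈ A, w e := hA'le A hA
      linarith [hBval, hAval, h1, h2, h3, h4]
    · -- exchange
      obtain ⟨A', B'', hA', hB'', hfA', hsum⟩ :=
        exchange hXX' w hA hB hfB hfA hf1 hf2
      have h1 : OPT Es X' w' ≤ ∑ e ∈ A', w' e := hB'le A' hA'
      have h2 : ∑ e ∈ A', w' e = ∑ e ∈ A', w e := by rw [hws]; simp [hfA']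
      have h3 : ∑ e ∈ A, w' e = ∑ e ∈ A, w e := by rw [hws]; simp [hfA]
      have h4 : OPT Es X w ≤ ∑ e ∈ B'', w e := hA'le B'' hB''
      linarith [hBval, hAval, h1, h2, h3, h4, hsum]
  · -- f not in the optimal tree for (X', w): LHS ≤ 0 ≤ RHS
    have h1 : OPT Es X' w' ≤ ∑ e ∈ B, w' e := hB'le B hB
    have h2 : ∑ e ∈ B, w' e = ∑ e ∈ B, w e := by rw [hws]; simp [hfB]
    have h3 : ∑ e ∈ A, w' e = (∑ e ∈ A, w e) + (if f ∈ A then δ else 0) := hws A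
    have h4 : OPT Es X w ≤ ∑ e ∈ A, w e := hA'le A hA
    have h5 : (0:ℝ) ≤ if f ∈ A then δ else 0 := by positivity
    linarith [hBval, hAval, h1, h2, h3, h4, h5]
end

section
/- The Shapley value of the minimum spanning tree game is 2-Lipschitz: for any graph G = (V ∪ {r}, E) with edge (r,v) for all v ∈ V, any nonnegative weight vectors w and w', the Shapley values s(w), s(w') ∈ ℝ^V of the minimum spanning tree games on (G,w) and (G,w') satisfy ‖s(w) - s(w')‖₁ ≤ 2‖w - w'‖₁. -/
/-- The characteristic function of the minimum spanning tree game: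
`ν(S) = OPT(S ∪ {r})`. -/
noncomputable def mstNu {U : Type*} [DecidableEq U] (Es : Finset (U × U)) (r : U)
    (w : U × U → ℝ) (S : Finset U) : ℝ :=
  OPT Es (insert r S) w

/-- The set of agents occupying the first `k` positions of the ordering `σ`. -/
def prefixSet {U : Type*} [Fintype U] [DecidableEq U] (r : U)
    (σ : Fin (Fintype.card {u : U // u ≠ r}) ≃ {u : U // u ≠ r}) (k : ℕ) :
    Finset U :=
  (Finset.univ.filter (fun j : Fin (Fintype.card {u : U // u ≠ r}) => (j : ℕ) < k)).image
    (fun j => (σ j : U))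

/-- The Shapley value of the minimum spanning tree game. -/
noncomputable def mstShapley {U : Type*} [Fintype U] [DecidableEq U]
    (Es : Finset (U × U)) (r : U) (w : U × U → ℝ) (v : {u : U // u ≠ r}) : ℝ :=
  ((Fintype.card {u : U // u ≠ r}).factorial : ℝ)⁻¹ *
    ∑ σ : Fin (Fintype.card {u : U // u ≠ r}) ≃ {u : U // u ≠ r},
      (mstNu Es r w (insert (v : U) (prefixSet r σ (σ.symm v))) -
        mstNu Es r w (prefixSet r σ (σ.symm v)))


/-!
Fix an ordering of the agents and raise the weight of a single edge `f` by `δ ≥ 0`. Along the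
chain of prefix coalitions, the increase `h(S) = ν_{w + δ 1_f}(S) - ν_w(S)` lies in `[0, δ]`,
vanishes while an endpoint of `f` lies outside `S ∪ {r}`, and from then on is non-increasing,
because optimal spanning trees of nested vertex sets admit a symmetric edge exchange. The
differences of the marginal contributions are the increments of `h`, so they have total
variation at most `2 δ`. Averaging over the orderings bounds the effect of one edge, and
changing the edges one at a time gives the general bound.
-/

namespace EdgeConn

variable {U : Type*} {F F' : Finset (U × U)} {a b c : U}

@[refl]
lemma refl (F : Finset (U × U)) (a : U) : EdgeConn F a a :=
  Relation.ReflTransGen.refl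

lemma trans (hab : EdgeConn F a b) (hbc : EdgeConn F b c) : EdgeConn F a c :=
  Relation.ReflTransGen.trans hab hbc

lemma symm (h : EdgeConn F a b) : EdgeConn F b a :=
  (@Relation.ReflTransGen.stdSymm _ _ ⟨fun _ _ hxy => hxy.symm⟩).symm _ _ h

lemma of_mem {e : U × U} (he : e ∈ F) : EdgeConn F e.1 e.2 :=
  Relation.ReflTransGen.single (Or.inl he)

lemma of_forall_mem (hF : ∀ e ∈ F, EdgeConn F' e.1 e.2) (h : EdgeConn F a b) :
    EdgeConn F' a b :=
  Relation.reflTransGen_closed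
    (fun _ _ hxy => hxy.elim (fun h => hF _ h) (fun h => (hF _ h).symm)) _ _ h

lemma mono (hFF' : F ⊆ F') (h : EdgeConn F a b) : EdgeConn F' a b :=
  of_forall_mem (fun _ he => of_mem (hFF' he)) h

lemma exists_mem_not_edgeConn (h : EdgeConn F a b) (h' : ¬ EdgeConn F' a b) :
    ∃ e ∈ F, ¬ EdgeConn F' e.1 e.2 := by
  by_contra! hF
  exact h' (of_forall_mem hF h)

variable [DecidableEq U]

lemma erase_cases (e : U × U) (h : EdgeConn F a b) :
    EdgeConn (F.erase e) a b ∨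
      (EdgeConn (F.erase e) a e.1 ∧ EdgeConn (F.erase e) e.2 b) ∨
      (EdgeConn (F.erase e) a e.2 ∧ EdgeConn (F.erase e) e.1 b) := by
  induction h with
  | refl => exact Or.inl (refl _ _)
  | @tail x y _ hxy ih =>
    by_cases hxy' : EdgeConn (F.erase e) x y
    · rcases ih with h | ⟨h1, h2⟩ | ⟨h1, h2⟩
      · exact Or.inl (h.trans hxy')
      · exact Or.inr (Or.inl ⟨h1, h2.trans hxy'⟩)
      · exact Or.inr (Or.inr ⟨h1, h2.trans hxy'⟩)
    · have hxy_e : (x, y) = e ∨ (y, x) = e := by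
        refine hxy.imp (fun h => ?_) (fun h => ?_) <;> by_contra hne
        · exact hxy' (of_mem (Finset.mem_erase.2 ⟨hne, h⟩))
        · exact hxy' (of_mem (Finset.mem_erase.2 ⟨hne, h⟩)).symm
      rcases hxy_e with rfl | rfl <;> rcases ih with h | ⟨h1, h2⟩ | ⟨h1, h2⟩
      · exact Or.inr (Or.inl ⟨h, refl _ _⟩)
      · exact Or.inl (h1.trans h2.symm)
      · exact Or.inl h1
      · exact Or.inr (Or.inr ⟨h, refl _ _⟩)
      · exact Or.inl h1
      · exact Or.inl (h1.trans h2.symm)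

lemma insert_erase {e : U × U} (h : EdgeConn F a b)
    (he : ¬ EdgeConn (F.erase e) a b) : EdgeConn (insert (a, b) (F.erase e)) e.1 e.2 := by
  have hab : EdgeConn (insert (a, b) (F.erase e)) a b := of_mem (Finset.mem_insert_self _ _)
  have hsub : F.erase e ⊆ insert (a, b) (F.erase e) := Finset.subset_insert _ _
  rcases erase_cases e h with h | ⟨h1, h2⟩ | ⟨h1, h2⟩
  · exact absurd h he
  · exact (((h1.mono hsub).symm.trans hab).trans (h2.mono hsub).symm)
  · exact (((h1.mono hsub).symm.trans hab).trans (h2.mono hsub).symm).symm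

end EdgeConn

lemma card_le_card_add_one_of_edgeConn {U : Type*} {F : Finset (U × U)} {X : Finset U}
    (hF : ∀ e ∈ F, e.1 ∈ X ∧ e.2 ∈ X)
    (hconn : ∀ a ∈ X, ∀ b ∈ X, EdgeConn F a b) : X.card ≤ F.card + 1 := by
  rcases X.eq_empty_or_nonempty with rfl | ⟨x₀, hx₀⟩
  · simp
  let G : SimpleGraph X := SimpleGraph.fromRel fun a b => ((a : U), (b : U)) ∈ F
  have hreach : ∀ (a : X) (y : U), EdgeConn F a y → ∃ hy : y ∈ X, G.Reachable a ⟨y, hy⟩ := by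
    intro a y h
    induction h with
    | refl => exact ⟨a.2, SimpleGraph.Reachable.refl _⟩
    | @tail y z _ hyz ih =>
      obtain ⟨hy, hay⟩ := ih
      have hz : z ∈ X := hyz.elim (fun h => (hF _ h).2) (fun h => (hF _ h).1)
      refine ⟨hz, hay.trans ?_⟩
      by_cases hyz' : y = z
      · subst hyz'; rfl
      · exact SimpleGraph.Adj.reachable
          ((SimpleGraph.fromRel_adj _ _ _).2 ⟨fun h => hyz' (congrArg Subtype.val h), hyz⟩)
  have hG : G.Connected := by
    have : Nonempty X := ⟨⟨x₀, hx₀⟩⟩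
    refine SimpleGraph.Connected.mk fun a b => ?_
    obtain ⟨_, h⟩ := hreach a b (hconn a a.2 b b.2)
    exact h
  have hedges : G.edgeSet.ncard ≤ F.card := by
    calc G.edgeSet.ncard = (Sym2.map Subtype.val '' G.edgeSet).ncard :=
          (Set.ncard_image_of_injective _ (Sym2.map.injective Subtype.val_injective)).symm
      _ ≤ ((fun e : U × U => s(e.1, e.2)) '' (F : Set (U × U))).ncard := by
          refine Set.ncard_le_ncard ?_ ((F.finite_toSet).image _)
          rintro _ ⟨z, hz, rfl⟩
          induction z using Sym2.ind with
          | _ a b =>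
            obtain ⟨-, hab | hba⟩ := (SimpleGraph.fromRel_adj _ _ _).1 (G.mem_edgeSet.1 hz)
            · exact ⟨_, hab, by simp⟩
            · exact ⟨_, hba, by simp [Sym2.eq_swap]⟩
      _ ≤ (F : Set (U × U)).ncard := Set.ncard_image_le F.finite_toSet
      _ = F.card := Set.ncard_coe_finset F
  have := hG.card_vert_le_card_edgeSet_add_one
  rw [Nat.card_coe_set_eq, Nat.card_eq_fintype_card, Fintype.card_coe] at this
  omega

namespace IsSpanningTree

variable {U : Type*} {Es F : Finset (U × U)} {X : Finset U}

lemma edgeConn (hT : IsSpanningTree Es X F) {a b : U} (ha : a ∈ X) (hb : b ∈ X) :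
    EdgeConn F a b :=
  hT.2.2.1 a ha b hb

lemma endpoints_mem (hT : IsSpanningTree Es X F) {e : U × U} (he : e ∈ F) : e.1 ∈ X ∧ e.2 ∈ X :=
  hT.2.1 e he

variable [DecidableEq U]

lemma not_edgeConn_erase (hT : IsSpanningTree Es X F) {e : U × U} (he : e ∈ F) :
    ¬ EdgeConn (F.erase e) e.1 e.2 := by
  intro hc
  obtain ⟨-, hend, hconn, hcard⟩ := hT
  have hconn' : ∀ a ∈ X, ∀ b ∈ X, EdgeConn (F.erase e) a b := fun a ha b hb =>
    (hconn a ha b hb).of_forall_mem fun g hg => by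
      by_cases hge : g = e
      · exact hge ▸ hc
      · exact EdgeConn.of_mem (Finset.mem_erase.2 ⟨hge, hg⟩)
  have := card_le_card_add_one_of_edgeConn
    (fun g hg => hend g (Finset.mem_of_mem_erase hg)) hconn'
  have := Finset.card_erase_add_one he
  omega

lemma insert_erase (hT : IsSpanningTree Es X F) {e f : U × U} (he : e ∈ F) (hfEs : f ∈ Es)
    (hfX : f.1 ∈ X ∧ f.2 ∈ X) (hfF : f ∉ F.erase e)
    (hconn : EdgeConn (insert f (F.erase e)) e.1 e.2) :
    IsSpanningTree Es X (insert f (F.erase e)) := by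
  obtain ⟨hEs, hend, hconnF, hcard⟩ := hT
  refine ⟨Finset.insert_subset hfEs ((Finset.erase_subset _ _).trans hEs), ?_, ?_, ?_⟩
  · intro g hg
    rcases Finset.mem_insert.1 hg with rfl | hg
    exacts [hfX, hend g (Finset.mem_of_mem_erase hg)]
  · refine fun a ha b hb => (hconnF a ha b hb).of_forall_mem fun g hg => ?_
    by_cases hge : g = e
    · exact hge ▸ hconn
    · exact EdgeConn.of_mem (Finset.mem_insert_of_mem (Finset.mem_erase.2 ⟨hge, hg⟩))
  · rw [Finset.card_insert_of_notMem hfF, Finset.card_erase_add_one he, hcard]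

/-- The edge `e` is taken on a minimal path from `f.1` to `f.2` in `FX`, among the edges
joining the two components of `FY \ {f}`; minimality makes `e` separate `f.1` from `f.2`
on that path. -/
lemma exists_exchange {Y : Finset U} {FX FY : Finset (U × U)} {f : U × U} (hXY : X ⊆ Y)
    (hX : IsSpanningTree Es X FX) (hY : IsSpanningTree Es Y FY) (hfX : f.1 ∈ X ∧ f.2 ∈ X)
    (hfFY : f ∈ FY) (hfFX : f ∉ FX) :
    ∃ e ∈ FX, e ∉ FY ∧ IsSpanningTree Es Y (insert e (FY.erase f)) ∧
      IsSpanningTree Es X (insert f (FX.erase e)) := by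
  obtain ⟨P, hPFX, hP, hPmin⟩ := exists_minimal_le_of_wellFoundedLT
    (fun P => EdgeConn P f.1 f.2) FX (hX.edgeConn hfX.1 hfX.2)
  obtain ⟨e, heP, he⟩ :=
    EdgeConn.exists_mem_not_edgeConn hP (hY.not_edgeConn_erase hfFY)
  have heFX : e ∈ FX := hPFX heP
  have heX : e.1 ∈ X ∧ e.2 ∈ X := hX.endpoints_mem heFX
  have heFY : e ∉ FY := fun h => he (EdgeConn.of_mem
    (Finset.mem_erase.2 ⟨fun hef => hfFX (hef ▸ heFX), h⟩))
  refine ⟨e, heFX, heFY, hY.insert_erase hfFY (hX.1 heFX) ⟨hXY heX.1, hXY heX.2⟩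
    (fun h => heFY (Finset.mem_of_mem_erase h)) ?_, hX.insert_erase heFX (hY.1 hfFY) hfX
    (fun h => hfFX (Finset.mem_of_mem_erase h)) ?_⟩
  · exact EdgeConn.insert_erase (hY.edgeConn (hXY heX.1) (hXY heX.2)) he
  · have hPe : ¬ EdgeConn (P.erase e) f.1 f.2 := fun h =>
      (Finset.erase_ssubset heP).not_ge (hPmin h (Finset.erase_subset _ _))
    exact (EdgeConn.insert_erase hP hPe).mono
      (Finset.insert_subset_insert _ (Finset.erase_subset_erase _ hPFX))

end IsSpanningTree

section OPT

variable {U : Type*} {Es F : Finset (U × U)} {X Y : Finset U} {w : U × U → ℝ}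

lemma finite_setOf_isSpanningTree_sum (Es : Finset (U × U)) (X : Finset U) (w : U × U → ℝ) :
    {t | ∃ F, IsSpanningTree Es X F ∧ t = ∑ e ∈ F, w e}.Finite := by
  refine (Es.powerset.finite_toSet.image fun F => ∑ e ∈ F, w e).subset ?_
  rintro _ ⟨F, hF, rfl⟩
  exact ⟨F, Finset.mem_powerset.2 hF.1, rfl⟩

lemma OPT_le (hF : IsSpanningTree Es X F) (w : U × U → ℝ) : OPT Es X w ≤ ∑ e ∈ F, w e :=
  csInf_le (finite_setOf_isSpanningTree_sum Es X w).bddBelow ⟨F, hF, rfl⟩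

lemma exists_OPT_eq (hex : ∃ F, IsSpanningTree Es X F) (w : U × U → ℝ) :
    ∃ F, IsSpanningTree Es X F ∧ OPT Es X w = ∑ e ∈ F, w e := by
  obtain ⟨F₀, hF₀⟩ := hex
  have hne : {t | ∃ F, IsSpanningTree Es X F ∧ t = ∑ e ∈ F, w e}.Nonempty := ⟨_, F₀, hF₀, rfl⟩
  exact hne.csInf_mem (finite_setOf_isSpanningTree_sum Es X w)

lemma OPT_congr {w' : U × U → ℝ} (h : ∀ e ∈ Es, w e = w' e) : OPT Es X w = OPT Es X w' := by
  have hsum : ∀ F, IsSpanningTree Es X F → ∑ e ∈ F, w e = ∑ e ∈ F, w' e :=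
    fun F hF => Finset.sum_congr rfl fun e he => h e (hF.1 he)
  unfold OPT
  congr 1
  ext t
  exact exists_congr fun F => and_congr_right fun hF => by rw [hsum F hF]

variable [DecidableEq U] {f : U × U} {δ : ℝ}

lemma sum_add_single (F : Finset (U × U)) :
    ∑ e ∈ F, (w + Pi.single f δ : U × U → ℝ) e = ∑ e ∈ F, w e + if f ∈ F then δ else 0 := by
  simp only [Pi.add_apply, Finset.sum_add_distrib, Finset.sum_pi_single']

lemma OPT_le_OPT_add_single (hex : ∃ F, IsSpanningTree Es X F) (hδ : 0 ≤ δ) :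
    OPT Es X w ≤ OPT Es X (w + Pi.single f δ) := by
  obtain ⟨F, hF, hOPT⟩ := exists_OPT_eq hex (w + Pi.single f δ)
  calc OPT Es X w ≤ ∑ e ∈ F, w e := OPT_le hF w
    _ ≤ OPT Es X (w + Pi.single f δ) := by
      rw [hOPT, sum_add_single]
      split_ifs <;> linarith

lemma OPT_add_single_le (hex : ∃ F, IsSpanningTree Es X F) (hδ : 0 ≤ δ) :
    OPT Es X (w + Pi.single f δ) ≤ OPT Es X w + δ := by
  obtain ⟨F, hF, hOPT⟩ := exists_OPT_eq hex w
  calc OPT Es X (w + Pi.single f δ) ≤ ∑ e ∈ F, (w + Pi.single f δ : U × U → ℝ) e := OPT_le hF _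
    _ ≤ OPT Es X w + δ := by
      rw [hOPT, sum_add_single]
      split_ifs <;> linarith

lemma OPT_add_single_of_not_mem (hex : ∃ F, IsSpanningTree Es X F) (hf : ¬ (f.1 ∈ X ∧ f.2 ∈ X))
    (hδ : 0 ≤ δ) : OPT Es X (w + Pi.single f δ) = OPT Es X w := by
  obtain ⟨F, hF, hOPT⟩ := exists_OPT_eq hex w
  have hfF : f ∉ F := fun h => hf (hF.endpoints_mem h)
  refine le_antisymm ?_ (OPT_le_OPT_add_single hex hδ)
  calc OPT Es X (w + Pi.single f δ) ≤ ∑ e ∈ F, (w + Pi.single f δ : U × U → ℝ) e := OPT_le hF _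
    _ = OPT Es X w := by rw [hOPT, sum_add_single, if_neg hfF, add_zero]

/-- Optimal trees on `Y` and on `X` can be exchanged so that the two perturbed costs trade
places. -/
lemma OPT_add_single_sub_OPT_le_of_subset (hXY : X ⊆ Y) (hexX : ∃ F, IsSpanningTree Es X F)
    (hexY : ∃ F, IsSpanningTree Es Y F) (hfX : f.1 ∈ X ∧ f.2 ∈ X) (hδ : 0 ≤ δ) :
    OPT Es Y (w + Pi.single f δ) - OPT Es Y w ≤ OPT Es X (w + Pi.single f δ) - OPT Es X w := by
  obtain ⟨FY, hFY, hOY⟩ := exists_OPT_eq hexY w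
  obtain ⟨FX, hFX, hOX⟩ := exists_OPT_eq hexX (w + Pi.single f δ)
  suffices ∃ TY TX, IsSpanningTree Es Y TY ∧ IsSpanningTree Es X TX ∧
      ∑ e ∈ TY, (w + Pi.single f δ : U × U → ℝ) e + ∑ e ∈ TX, w e ≤
        ∑ e ∈ FY, w e + ∑ e ∈ FX, (w + Pi.single f δ : U × U → ℝ) e by
    obtain ⟨TY, TX, hTY, hTX, hle⟩ := this
    linarith [OPT_le hTY (w + Pi.single f δ), OPT_le hTX w]
  by_cases hexch : f ∈ FY ∧ f ∉ FX
  · obtain ⟨hfFY, hfFX⟩ := hexch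
    obtain ⟨e, heFX, heFY, hTY, hTX⟩ :=
      IsSpanningTree.exists_exchange hXY hFX hFY hfX hfFY hfFX
    have hef : e ≠ f := fun h => hfFX (h ▸ heFX)
    refine ⟨_, _, hTY, hTX, le_of_eq ?_⟩
    rw [Finset.sum_insert (fun h => heFY (Finset.mem_of_mem_erase h)), Finset.sum_insert
      (fun h => hfFX (Finset.mem_of_mem_erase h)), sum_add_single, sum_add_single, if_neg hfFX,
      if_neg (Finset.notMem_erase f FY)]
    have := Finset.sum_erase_add _ w hfFY
    have := Finset.sum_erase_add _ w heFX
    simp only [Pi.add_apply, Pi.single_apply, if_neg hef]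
    linarith
  · refine ⟨FY, FX, hFY, hFX, ?_⟩
    have : (if f ∈ FY then δ else 0) ≤ if f ∈ FX then δ else 0 := by
      split_ifs <;> simp_all
    simp only [sum_add_single]
    linarith

end OPT

lemma sum_range_abs_sub_le_two_mul {h : ℕ → ℝ} {Q : ℕ → Prop} {δ : ℝ}
    (hQ : ∀ k, Q k → Q (k + 1)) (hnonneg : ∀ k, 0 ≤ h k) (hle : ∀ k, h k ≤ δ)
    (hzero : ∀ k, ¬ Q k → h k = 0) (hanti : ∀ k, Q k → h (k + 1) ≤ h k) (n : ℕ) :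
    ∑ k ∈ Finset.range n, |h (k + 1) - h k| ≤ 2 * δ := by
  classical
  suffices key : ∀ n, ∑ k ∈ Finset.range n, |h (k + 1) - h k| ≤ if Q n then 2 * δ - h n else 0 by
    refine (key n).trans ?_
    split_ifs <;> linarith [hnonneg n, hle n]
  intro n
  induction n with
  | zero =>
    split_ifs <;> simp only [Finset.range_zero, Finset.sum_empty] <;>
      linarith [hle 0, hnonneg 0]
  | succ n ih =>
    rw [Finset.sum_range_succ]
    by_cases hn : Q n
    · rw [if_pos hn] at ih
      rw [if_pos (hQ n hn), abs_of_nonpos (by linarith [hanti n hn])]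
      linarith
    · rw [if_neg hn] at ih
      rw [hzero n hn, sub_zero, abs_of_nonneg (hnonneg _)]
      split_ifs with hn'
      · linarith [hle (n + 1)]
      · rw [hzero _ hn']
        linarith

section Prefix

variable {U : Type*} [Fintype U] [DecidableEq U] {r : U}
  {σ : Fin (Fintype.card {u : U // u ≠ r}) ≃ {u : U // u ≠ r}}

lemma prefixSet_mono {k l : ℕ} (hkl : k ≤ l) : prefixSet r σ k ⊆ prefixSet r σ l :=
  Finset.image_subset_image fun j hj => by
    simp only [Finset.mem_filter, Finset.mem_univ, true_and] at hj ⊢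
    omega

lemma prefixSet_succ (k : Fin (Fintype.card {u : U // u ≠ r})) :
    prefixSet r σ (k + 1) = insert (σ k : U) (prefixSet r σ k) := by
  have hfilter : Finset.univ.filter (fun j : Fin (Fintype.card {u : U // u ≠ r}) => (j : ℕ) < k + 1)
      = insert k (Finset.univ.filter fun j : Fin _ => (j : ℕ) < k) := by
    ext j
    simp only [Finset.mem_filter, Finset.mem_univ, true_and, Finset.mem_insert, Nat.lt_succ_iff,
      le_iff_lt_or_eq, Fin.ext_iff]
    tauto
  rw [prefixSet, prefixSet, hfilter, Finset.image_insert]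

end Prefix

lemma isSpanningTree_star {U : Type*} [DecidableEq U] {Es : Finset (U × U)} {r : U}
    (hstar : ∀ v : U, v ≠ r → (r, v) ∈ Es) {X : Finset U} (hrX : r ∈ X) :
    IsSpanningTree Es X ((X.erase r).image fun v => (r, v)) := by
  have hspoke : ∀ x ∈ X, EdgeConn ((X.erase r).image fun v => (r, v)) r x := by
    intro x hx
    rcases eq_or_ne x r with rfl | hxr
    · rfl
    · exact EdgeConn.of_mem (Finset.mem_image_of_mem _ (Finset.mem_erase.2 ⟨hxr, hx⟩))
  refine ⟨?_, ?_, fun a ha b hb => (hspoke a ha).symm.trans (hspoke b hb), ?_⟩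
  · intro e he
    obtain ⟨v, hv, rfl⟩ := Finset.mem_image.1 he
    exact hstar v (Finset.ne_of_mem_erase hv)
  · intro e he
    obtain ⟨v, hv, rfl⟩ := Finset.mem_image.1 he
    exact ⟨hrX, Finset.mem_of_mem_erase hv⟩
  · rw [Finset.card_image_of_injective _ fun x y h => (Prod.mk.inj h).2,
      Finset.card_erase_add_one hrX]

lemma sum_abs_inv_card_mul_sum_le {ι κ : Type*} [Fintype ι] [Fintype κ] [Nonempty κ]
    (a : κ → ι → ℝ) {B : ℝ} (h : ∀ k, ∑ i, |a k i| ≤ B) :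
    ∑ i, |(Fintype.card κ : ℝ)⁻¹ * ∑ k, a k i| ≤ B := by
  have hcard : (0 : ℝ) < Fintype.card κ := by exact_mod_cast Fintype.card_pos
  calc ∑ i, |(Fintype.card κ : ℝ)⁻¹ * ∑ k, a k i|
      = (Fintype.card κ : ℝ)⁻¹ * ∑ i, |∑ k, a k i| := by
        rw [Finset.mul_sum]
        simp only [abs_mul, abs_inv, Nat.abs_cast]
    _ ≤ (Fintype.card κ : ℝ)⁻¹ * ∑ k, ∑ i, |a k i| := by
        rw [Finset.sum_comm (f := fun k i => |a k i|)]
        gcongr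
        exact Finset.abs_sum_le_sum_abs _ _
    _ ≤ (Fintype.card κ : ℝ)⁻¹ * ∑ _k : κ, B := by gcongr with k; exact h k
    _ = B := by
        rw [Finset.sum_const, Finset.card_univ, nsmul_eq_mul, inv_mul_cancel_left₀ hcard.ne']

lemma sum_abs_sub_le_of_add_single {α ι : Type*} [DecidableEq α] [Fintype ι]
    (Φ : (α → ℝ) → ι → ℝ) (s : Finset α) {C : ℝ}
    (hcongr : ∀ w w' : α → ℝ, (∀ e ∈ s, w e = w' e) → Φ w = Φ w')
    (hsingle : ∀ w, ∀ f ∈ s, ∀ d : ℝ, 0 ≤ d → ∑ i, |Φ w i - Φ (w + Pi.single f d) i| ≤ C * d)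
    (w w' : α → ℝ) :
    ∑ i, |Φ w i - Φ w' i| ≤ C * ∑ e ∈ s, |w e - w' e| := by
  have hsingle' : ∀ w, ∀ f ∈ s, ∀ d : ℝ, ∑ i, |Φ w i - Φ (w + Pi.single f d) i| ≤ C * |d| := by
    intro w f hf d
    rcases le_or_gt 0 d with hd | hd
    · rw [abs_of_nonneg hd]
      exact hsingle w f hf d hd
    · have hback : w + Pi.single f d + Pi.single f (-d) = w := by
        rw [add_assoc, ← Pi.single_add, add_neg_cancel, Pi.single_zero, add_zero]
      have := hsingle (w + Pi.single f d) f hf (-d) (by linarith)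
      rw [hback] at this
      simpa only [abs_of_neg hd, abs_sub_comm] using this
  suffices key : ∀ A ⊆ s, ∑ i, |Φ w i - Φ (A.piecewise w' w) i| ≤ C * ∑ e ∈ A, |w e - w' e| by
    rw [hcongr w' (s.piecewise w' w) fun e he => (s.piecewise_eq_of_mem _ _ he).symm]
    exact key s subset_rfl
  intro A
  induction A using Finset.induction_on with
  | empty => simp
  | @insert f A hfA ih =>
    intro hA
    have hstep : (insert f A).piecewise w' w = A.piecewise w' w + Pi.single f (w' f - w f) := by
      ext e
      by_cases hef : e = f
      · subst hef
        simp [hfA]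
      · simp [hef, Finset.piecewise]
    calc ∑ i, |Φ w i - Φ ((insert f A).piecewise w' w) i|
        ≤ ∑ i, (|Φ w i - Φ (A.piecewise w' w) i| +
            |Φ (A.piecewise w' w) i - Φ ((insert f A).piecewise w' w) i|) :=
          Finset.sum_le_sum fun i _ => abs_sub_le _ _ _
      _ ≤ C * ∑ e ∈ A, |w e - w' e| + C * |w' f - w f| := by
          rw [Finset.sum_add_distrib, hstep]
          exact add_le_add (ih ((Finset.subset_insert _ _).trans hA))
            (hsingle' _ f (hA (Finset.mem_insert_self _ _)) _)
      _ = C * ∑ e ∈ insert f A, |w e - w' e| := by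
          rw [Finset.sum_insert hfA, abs_sub_comm (w' f)]
          ring

section Shapley

variable {U : Type*} [Fintype U] [DecidableEq U] {Es : Finset (U × U)} {r : U}

noncomputable def mstMarginal (Es : Finset (U × U)) (r : U) (w : U × U → ℝ)
    (σ : Fin (Fintype.card {u : U // u ≠ r}) ≃ {u : U // u ≠ r}) (v : {u : U // u ≠ r}) : ℝ :=
  mstNu Es r w (insert (v : U) (prefixSet r σ (σ.symm v))) -
    mstNu Es r w (prefixSet r σ (σ.symm v))

lemma mstMarginal_eq (w : U × U → ℝ)
    (σ : Fin (Fintype.card {u : U // u ≠ r}) ≃ {u : U // u ≠ r}) (v : {u : U // u ≠ r}) :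
    mstMarginal Es r w σ v =
      mstNu Es r w (prefixSet r σ (σ.symm v + 1)) - mstNu Es r w (prefixSet r σ (σ.symm v)) := by
  rw [mstMarginal, prefixSet_succ, Equiv.apply_symm_apply]

lemma sum_abs_mstMarginal_sub_add_single_le (hstar : ∀ v : U, v ≠ r → (r, v) ∈ Es)
    (w : U × U → ℝ) (f : U × U) {δ : ℝ} (hδ : 0 ≤ δ)
    (σ : Fin (Fintype.card {u : U // u ≠ r}) ≃ {u : U // u ≠ r}) :
    ∑ v, |mstMarginal Es r w σ v - mstMarginal Es r (w + Pi.single f δ) σ v| ≤ 2 * δ := by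
  let X : ℕ → Finset U := fun k => insert r (prefixSet r σ k)
  let h : ℕ → ℝ := fun k => OPT Es (X k) (w + Pi.single f δ) - OPT Es (X k) w
  have hex : ∀ k, ∃ F, IsSpanningTree Es (X k) F :=
    fun k => ⟨_, isSpanningTree_star hstar (Finset.mem_insert_self r _)⟩
  have hXsucc : ∀ k, X k ⊆ X (k + 1) :=
    fun k => Finset.insert_subset_insert _ (prefixSet_mono k.le_succ)
  have hterm : ∀ v, |mstMarginal Es r w σ v - mstMarginal Es r (w + Pi.single f δ) σ v| =
      |h (σ.symm v + 1) - h (σ.symm v)| := by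
    intro v
    rw [mstMarginal_eq, mstMarginal_eq, abs_sub_comm]
    congr 1
    simp only [h, X, mstNu]
    ring
  calc ∑ v, |mstMarginal Es r w σ v - mstMarginal Es r (w + Pi.single f δ) σ v|
      = ∑ v, |h (σ.symm v + 1) - h (σ.symm v)| := by
        refine Finset.sum_congr rfl fun v _ => ?_
        exact hterm v
    _ = ∑ k ∈ Finset.range (Fintype.card {u : U // u ≠ r}), |h (k + 1) - h k| := by
      rw [← Fin.sum_univ_eq_sum_range]
      exact Equiv.sum_comp σ.symm fun k => |h (k + 1) - h k|
    _ ≤ 2 * δ := by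
      refine sum_range_abs_sub_le_two_mul (Q := fun k => f.1 ∈ X k ∧ f.2 ∈ X k)
        (fun k hk => ⟨hXsucc k hk.1, hXsucc k hk.2⟩)
        (fun k => sub_nonneg.2 (OPT_le_OPT_add_single (hex k) hδ))
        (fun k => sub_le_iff_le_add'.2 (OPT_add_single_le (hex k) hδ))
        (fun k hk => sub_eq_zero.2 (OPT_add_single_of_not_mem (hex k) hk hδ))
        (fun k hk => OPT_add_single_sub_OPT_le_of_subset (hXsucc k) (hex k) (hex (k + 1)) hk hδ) _

lemma sum_abs_mstShapley_sub_add_single_le (hstar : ∀ v : U, v ≠ r → (r, v) ∈ Es)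
    (w : U × U → ℝ) (f : U × U) {δ : ℝ} (hδ : 0 ≤ δ) :
    ∑ v, |mstShapley Es r w v - mstShapley Es r (w + Pi.single f δ) v| ≤ 2 * δ := by
  have hcard : Fintype.card (Fin (Fintype.card {u : U // u ≠ r}) ≃ {u : U // u ≠ r}) =
      (Fintype.card {u : U // u ≠ r}).factorial := by
    rw [Fintype.card_equiv (Fintype.equivFin _).symm, Fintype.card_fin]
  have hdiff : ∀ v, mstShapley Es r w v - mstShapley Es r (w + Pi.single f δ) v =
      (Fintype.card (Fin (Fintype.card {u : U // u ≠ r}) ≃ {u : U // u ≠ r}) : ℝ)⁻¹ *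
        ∑ σ, (mstMarginal Es r w σ v - mstMarginal Es r (w + Pi.single f δ) σ v) := by
    intro v
    rw [hcard, Finset.sum_sub_distrib, mul_sub]
    rfl
  have : Nonempty (Fin (Fintype.card {u : U // u ≠ r}) ≃ {u : U // u ≠ r}) :=
    ⟨(Fintype.equivFin _).symm⟩
  simp only [hdiff]
  exact sum_abs_inv_card_mul_sum_le _ (sum_abs_mstMarginal_sub_add_single_le hstar w f hδ)

lemma mstShapley_congr {w w' : U × U → ℝ} (h : ∀ e ∈ Es, w e = w' e) :
    mstShapley Es r w = mstShapley Es r w' := by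
  funext v
  simp only [mstShapley, mstNu, OPT_congr h]

end Shapley

theorem stmt_13_general {U : Type*} [Fintype U] [DecidableEq U]
    (Es : Finset (U × U)) (r : U)
    (hstar : ∀ v : U, v ≠ r → (r, v) ∈ Es)
    (w w' : U × U → ℝ) :
    ∑ v : {u : U // u ≠ r}, |mstShapley Es r w v - mstShapley Es r w' v|
      ≤ 2 * ∑ e ∈ Es, |w e - w' e| :=
  sum_abs_sub_le_of_add_single (mstShapley Es r) Es (fun _ _ h => mstShapley_congr h)
    (fun w f _ _ hδ => sum_abs_mstShapley_sub_add_single_le hstar w f hδ) w w'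

theorem stmt_13 {U : Type*} [Fintype U] [DecidableEq U]
    (Es : Finset (U × U)) (r : U)
    (hstar : ∀ v : U, v ≠ r → (r, v) ∈ Es)
    (w w' : U × U → ℝ) (hw : ∀ e, 0 ≤ w e) (hw' : ∀ e, 0 ≤ w' e) :
    ∑ v : {u : U // u ≠ r}, |mstShapley Es r w v - mstShapley Es r w' v|
      ≤ 2 * ∑ e ∈ Es, |w e - w' e| :=
  stmt_13_general Es r hstar w w'
end

section
/- Let G = (V,E) be a graph and let two nonincreasing-order greedy maximal matchings M and M' be computed with respect to weight vectors ŵ and ŵ' that differ only on a single edge f (with ŵ'_f > ŵ_f and identical tie-breaking by edge index elsewhere). Then the symmetric difference M △ M' is either empty or forms a single path or cycle in G containing f, and in the latter case f ∈ M' \ M. -/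
variable {V : Type*} [DecidableEq V]

/-- Two (oriented) edges share an endpoint. -/
def touches (e f : V × V) : Prop :=
  e.1 = f.1 ∨ e.1 = f.2 ∨ e.2 = f.1 ∨ e.2 = f.2

instance instDecTouches (e f : V × V) : Decidable (touches e f) := by
  unfold touches; infer_instance

/-- Greedy maximal matching: process the edges of the list in order, adding an
edge whenever both of its endpoints are uncovered by the current matching. -/
def greedyAux : List (V × V) → List (V × V) → List (V × V)
  | acc, [] => acc
  | acc, e :: rest =>
      if acc.any (fun m => decide (touches e m)) then greedyAux acc rest
      else greedyAux (e :: acc) rest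

def greedy (l : List (V × V)) : List (V × V) := greedyAux [] l

/-- The allocation that assigns `wh e` to both endpoints of each matching edge. -/
def alloc (wh : V × V → ℝ) (M : List (V × V)) (v : V) : ℝ :=
  (M.map (fun e => if v = e.1 ∨ v = e.2 then wh e else 0)).sum
/-- An edge set forms a single path or cycle: every vertex meets at most two of
its edges, and any two of its edges are connected through adjacent edges of the set. -/
def IsSinglePathOrCycle [Fintype V] (D : Finset (V × V)) : Prop :=
  (∀ v : V, (D.filter (fun e => e.1 = v ∨ e.2 = v)).card ≤ 2) ∧
    ∀ e ∈ D, ∀ e' ∈ D,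
      Relation.ReflTransGen (fun a b => a ∈ D ∧ b ∈ D ∧ touches a b) e e'

/-! Every edge of `M ∆ M'` was rejected by one of the two runs because of an edge of the
other matching processed before it, and that blocking edge again lies in `M ∆ M'`. Raising the
weight of `f` only reorders pairs involving `f`, so following blocking edges strictly decreases
the position in `l` until the chain reaches `f`; it can only reach `f` as the blocker, in the
run on `l'`, of an edge of `M \ M'`, which puts `f` in `M' \ M`. Thus all of `M ∆ M'` is
connected to `f`, and since `M` and `M'` are matchings, every vertex meets at most two of its
edges. -/

open scoped symmDiff

lemma touches_symm {α : Type*} {e f : α × α} (h : touches e f) : touches f e := by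
  unfold touches at *
  tauto

instance {α : Type*} : Std.Symm (fun a b : α × α => ¬ touches a b) :=
  ⟨fun _ _ h h' => h (touches_symm h')⟩

lemma touches_of_incident {α : Type*} {e f : α × α} {v : α} (he : e.1 = v ∨ e.2 = v)
    (hf : f.1 = v ∨ f.2 = v) : touches e f := by
  unfold touches
  rcases he with rfl | rfl <;> rcases hf with hf | hf <;> simp [hf]

lemma greedyAux_append (acc p s : List (V × V)) :
    greedyAux acc (p ++ s) = greedyAux (greedyAux acc p) s := by
  induction p generalizing acc with
  | nil => rfl
  | cons e p ih =>
    simp only [List.cons_append, greedyAux]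
    split_ifs <;> exact ih _

lemma mem_greedyAux_of_mem_acc {a : V × V} {acc : List (V × V)} (l : List (V × V))
    (ha : a ∈ acc) : a ∈ greedyAux acc l := by
  induction l generalizing acc with
  | nil => exact ha
  | cons e l ih => unfold greedyAux; split <;> simp [ih, ha]

lemma mem_or_mem_of_mem_greedyAux {a : V × V} {acc l : List (V × V)}
    (ha : a ∈ greedyAux acc l) : a ∈ acc ∨ a ∈ l := by
  induction l generalizing acc with
  | nil => exact Or.inl ha
  | cons e l ih =>
    unfold greedyAux at ha
    split at ha <;> rcases ih ha with h | h <;> simp only [List.mem_cons] at h ⊢ <;> tauto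

lemma pairwise_greedyAux {acc : List (V × V)} (l : List (V × V))
    (hacc : acc.Pairwise fun a b => ¬ touches a b) :
    (greedyAux acc l).Pairwise fun a b => ¬ touches a b := by
  induction l generalizing acc with
  | nil => exact hacc
  | cons e l ih =>
    unfold greedyAux
    split
    · exact ih hacc
    · rename_i hfree
      simp only [List.any_eq_true, decide_eq_true_eq, not_exists, not_and] at hfree
      exact ih (List.pairwise_cons.2 ⟨hfree, hacc⟩)

lemma exists_touches_of_notMem_greedyAux_cons {e : V × V} {acc s : List (V × V)}
    (he : e ∉ greedyAux acc (e :: s)) : ∃ m ∈ acc, touches e m := by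
  unfold greedyAux at he
  split at he
  · rename_i hblocked
    simpa only [List.any_eq_true, decide_eq_true_eq] using hblocked
  · exact absurd (mem_greedyAux_of_mem_acc s List.mem_cons_self) he

lemma mem_of_mem_greedy {a : V × V} {l : List (V × V)} (ha : a ∈ greedy l) : a ∈ l :=
  (mem_or_mem_of_mem_greedyAux ha).resolve_left List.not_mem_nil

lemma pairwise_greedy (l : List (V × V)) :
    ((greedy l).toFinset : Set (V × V)).Pairwise fun a b => ¬ touches a b := by
  rw [List.coe_toFinset]
  exact (pairwise_greedyAux l List.Pairwise.nil).set_pairwise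

lemma notMem_greedy_of_touches {l : List (V × V)} {e m : V × V} (he : e ∈ greedy l)
    (hem : touches e m) (hne : m ≠ e) : m ∉ greedy l := fun hm =>
  pairwise_greedy l (List.mem_toFinset.2 he) (List.mem_toFinset.2 hm) hne.symm hem

lemma List.idxOf_lt_idxOf_of_mem_left {α : Type*} [BEq α] [LawfulBEq α] {a b : α}
    {p s : List α} (ha : a ∈ p) (hb : b ∉ p) :
    (p ++ s).idxOf a < (p ++ s).idxOf b := by
  rw [List.idxOf_append_of_mem ha, List.idxOf_append_of_notMem hb]
  exact Nat.lt_add_right _ (List.idxOf_lt_length_iff.2 ha)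

lemma List.Pairwise.rel_of_idxOf_lt {α : Type*} [BEq α] [LawfulBEq α] {r : α → α → Prop}
    {l : List α} (hl : l.Pairwise r) {a b : α} (ha : a ∈ l) (hb : b ∈ l)
    (h : l.idxOf a < l.idxOf b) : r a b := by
  have := hl.rel_get_of_lt (a := ⟨l.idxOf a, List.idxOf_lt_length_iff.2 ha⟩)
    (b := ⟨l.idxOf b, List.idxOf_lt_length_iff.2 hb⟩) h
  simpa [List.getElem_idxOf] using this

lemma exists_touches_of_notMem_greedy {l : List (V × V)} (hl : l.Nodup) {e : V × V}
    (he : e ∈ l) (he' : e ∉ greedy l) :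
    ∃ m ∈ greedy l, touches e m ∧ l.idxOf m < l.idxOf e := by
  obtain ⟨p, s, rfl⟩ := List.append_of_mem he
  have hep : e ∉ p := fun h => (List.nodup_append.1 hl).2.2 e h e List.mem_cons_self rfl
  unfold greedy at he' ⊢
  rw [greedyAux_append] at he' ⊢
  obtain ⟨m, hm, hem⟩ := exists_touches_of_notMem_greedyAux_cons he'
  refine ⟨m, mem_greedyAux_of_mem_acc _ hm, hem, List.idxOf_lt_idxOf_of_mem_left ?_ hep⟩
  exact (mem_or_mem_of_mem_greedyAux hm).resolve_left List.not_mem_nil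

lemma card_filter_incident_le_one {M : Finset (V × V)}
    (hM : (M : Set (V × V)).Pairwise fun a b => ¬ touches a b) (v : V) :
    (M.filter fun e => e.1 = v ∨ e.2 = v).card ≤ 1 := by
  refine Finset.card_le_one.2 fun a ha b hb => ?_
  rw [Finset.mem_filter] at ha hb
  by_contra hab
  exact hM ha.1 hb.1 hab (touches_of_incident ha.2 hb.2)

lemma isSinglePathOrCycle_symmDiff [Fintype V] {M M' : Finset (V × V)}
    (hM : (M : Set (V × V)).Pairwise fun a b => ¬ touches a b)
    (hM' : (M' : Set (V × V)).Pairwise fun a b => ¬ touches a b) {f : V × V}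
    (hf : ∀ e ∈ M ∆ M', Relation.ReflTransGen
      (fun a b => a ∈ M ∆ M' ∧ b ∈ M ∆ M' ∧ touches a b) e f) :
    IsSinglePathOrCycle (M ∆ M') := by
  have : Std.Symm fun a b => a ∈ M ∆ M' ∧ b ∈ M ∆ M' ∧ touches a b :=
    ⟨fun _ _ ⟨ha, hb, h⟩ => ⟨hb, ha, touches_symm h⟩⟩
  refine ⟨fun v => ?_, fun a ha b hb => (hf a ha).trans (symm_of _ (hf b hb))⟩
  calc ((M ∆ M').filter fun e => e.1 = v ∨ e.2 = v).card
      ≤ ((M.filter fun e => e.1 = v ∨ e.2 = v) ∪ M'.filter fun e => e.1 = v ∨ e.2 = v).card := by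
        refine Finset.card_le_card fun a ha => ?_
        simp only [Finset.mem_filter, Finset.mem_union, Finset.mem_symmDiff] at ha ⊢
        tauto
    _ ≤ 2 := (Finset.card_union_le _ _).trans
        (add_le_add (card_filter_incident_le_one hM v) (card_filter_incident_le_one hM' v))

lemma idxOf_lt_of_idxOf_lt_of_ne_raised {wh wh' : V × V → ℝ} {f : V × V}
    (hlt : wh f < wh' f) (hrest : ∀ e, e ≠ f → wh' e = wh e)
    {l l' : List (V × V)} (hperm : l.Perm l')
    (hs : l.Pairwise fun a b => wh b ≤ wh a)
    (hs' : l'.Pairwise fun a b => wh' b ≤ wh' a)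
    (hties : ∀ e₁ ∈ l, ∀ e₂ ∈ l, e₁ ≠ f → e₂ ≠ f →
      (l.idxOf e₁ < l.idxOf e₂ ↔ l'.idxOf e₁ < l'.idxOf e₂))
    {m e : V × V} (hm : m ∈ l) (he : e ∈ l) (hmf : m ≠ f)
    (h' : l'.idxOf m < l'.idxOf e) : l.idxOf m < l.idxOf e := by
  by_cases hef : e = f
  · subst hef
    have hwm' : wh' e ≤ wh' m := hs'.rel_of_idxOf_lt (hperm.mem_iff.1 hm) (hperm.mem_iff.1 he) h'
    rw [hrest m hmf] at hwm'
    by_contra! hle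
    have hlt' : l.idxOf e < l.idxOf m := hle.lt_of_ne fun h => hmf ((List.idxOf_inj he).1 h).symm
    linarith [hs.rel_of_idxOf_lt he hm hlt']
  · exact (hties m hm e he hmf hef).2 h'

lemma exists_touches_mem_symmDiff_greedy {f : V × V} {l l' : List (V × V)}
    (hnodup : l.Nodup) (hperm : l.Perm l')
    (hprec : ∀ m ∈ l, ∀ e ∈ l, m ≠ f → l'.idxOf m < l'.idxOf e → l.idxOf m < l.idxOf e)
    {e : V × V} (he : e ∈ (greedy l).toFinset ∆ (greedy l').toFinset) :
    ∃ m ∈ (greedy l).toFinset ∆ (greedy l').toFinset, touches e m ∧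
      (m = f ∧ f ∈ (greedy l').toFinset \ (greedy l).toFinset ∨ l.idxOf m < l.idxOf e) := by
  simp only [Finset.mem_symmDiff, Finset.mem_sdiff, List.mem_toFinset] at he ⊢
  rcases he with ⟨heM, heM'⟩ | ⟨heM', heM⟩
  · obtain ⟨m, hmM', hem, hidx⟩ := exists_touches_of_notMem_greedy (hperm.nodup_iff.1 hnodup)
      (hperm.mem_iff.1 (mem_of_mem_greedy heM)) heM'
    have hmM : m ∉ greedy l :=
      notMem_greedy_of_touches heM hem (by rintro rfl; exact heM' hmM')
    refine ⟨m, Or.inr ⟨hmM', hmM⟩, hem, ?_⟩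
    by_cases hmf : m = f
    · exact Or.inl ⟨hmf, hmf ▸ hmM', hmf ▸ hmM⟩
    · exact Or.inr (hprec m (hperm.mem_iff.2 (mem_of_mem_greedy hmM')) e
        (mem_of_mem_greedy heM) hmf hidx)
  · obtain ⟨m, hmM, hem, hidx⟩ := exists_touches_of_notMem_greedy hnodup
      (hperm.mem_iff.2 (mem_of_mem_greedy heM')) heM
    exact ⟨m, Or.inl ⟨hmM, notMem_greedy_of_touches heM' hem (by rintro rfl; exact heM hmM)⟩,
      hem, Or.inr hidx⟩

lemma mem_sdiff_greedy_and_reflTransGen {f : V × V} {l l' : List (V × V)}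
    (hnodup : l.Nodup) (hperm : l.Perm l')
    (hprec : ∀ m ∈ l, ∀ e ∈ l, m ≠ f → l'.idxOf m < l'.idxOf e → l.idxOf m < l.idxOf e)
    {e : V × V} (he : e ∈ (greedy l).toFinset ∆ (greedy l').toFinset) :
    f ∈ (greedy l').toFinset \ (greedy l).toFinset ∧
      Relation.ReflTransGen (fun a b => a ∈ (greedy l).toFinset ∆ (greedy l').toFinset ∧
        b ∈ (greedy l).toFinset ∆ (greedy l').toFinset ∧ touches a b) e f := by
  induction hn : l.idxOf e using Nat.strong_induction_on generalizing e with
  | _ n ih =>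
  obtain ⟨m, hm, hem, ⟨rfl, hf⟩ | hidx⟩ := exists_touches_mem_symmDiff_greedy hnodup hperm hprec he
  · exact ⟨hf, .single ⟨he, hm, hem⟩⟩
  · obtain ⟨hf, hpath⟩ := ih _ (hn ▸ hidx) hm rfl
    exact ⟨hf, .head ⟨he, hm, hem⟩ hpath⟩

theorem stmt_18_general [Fintype V] (wh wh' : V × V → ℝ) (f : V × V)
    (hlt : wh f < wh' f) (hrest : ∀ e, e ≠ f → wh' e = wh e)
    (l l' : List (V × V)) (hperm : l.Perm l') (hnodup : l.Nodup)
    (hs : l.Pairwise fun a b => wh b ≤ wh a)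
    (hs' : l'.Pairwise fun a b => wh' b ≤ wh' a)
    (hties : ∀ e₁ ∈ l, ∀ e₂ ∈ l, e₁ ≠ f → e₂ ≠ f →
      (l.idxOf e₁ < l.idxOf e₂ ↔ l'.idxOf e₁ < l'.idxOf e₂)) :
    (greedy l).toFinset = (greedy l').toFinset ∨
      (f ∈ (greedy l').toFinset \ (greedy l).toFinset ∧
        IsSinglePathOrCycle
          (((greedy l).toFinset \ (greedy l').toFinset) ∪
            ((greedy l').toFinset \ (greedy l).toFinset)) ∧
        f ∈ ((greedy l).toFinset \ (greedy l').toFinset) ∪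
            ((greedy l').toFinset \ (greedy l).toFinset)) := by
  have hprec : ∀ m ∈ l, ∀ e ∈ l, m ≠ f → l'.idxOf m < l'.idxOf e → l.idxOf m < l.idxOf e :=
    fun m hm e he hmf => idxOf_lt_of_idxOf_lt_of_ne_raised hlt hrest hperm hs hs' hties hm he hmf
  have hD : ((greedy l).toFinset \ (greedy l').toFinset) ∪
      ((greedy l').toFinset \ (greedy l).toFinset) =
      (greedy l).toFinset ∆ (greedy l').toFinset := rfl
  rw [hD]
  rcases ((greedy l).toFinset ∆ (greedy l').toFinset).eq_empty_or_nonempty with hempty | ⟨e, he⟩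
  · exact Or.inl (symmDiff_eq_bot.1 hempty)
  · have hf := (mem_sdiff_greedy_and_reflTransGen hnodup hperm hprec he).1
    refine Or.inr ⟨hf, ?_, Finset.mem_symmDiff.2 (Or.inr (Finset.mem_sdiff.1 hf))⟩
    exact isSinglePathOrCycle_symmDiff (pairwise_greedy l) (pairwise_greedy l')
      fun e he => (mem_sdiff_greedy_and_reflTransGen hnodup hperm hprec he).2

theorem stmt_18 [Fintype V] (wh wh' : V × V → ℝ) (f : V × V)
    (hlt : wh f < wh' f) (hrest : ∀ e, e ≠ f → wh' e = wh e)
    (l l' : List (V × V)) (hperm : l.Perm l') (hnodup : l.Nodup) (hfl : f ∈ l)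
    (hsimple : ∀ e ∈ l, e.1 ≠ e.2)
    (hs : l.Pairwise fun a b => wh b ≤ wh a)
    (hs' : l'.Pairwise fun a b => wh' b ≤ wh' a)
    (hties : ∀ e₁ ∈ l, ∀ e₂ ∈ l, e₁ ≠ f → e₂ ≠ f →
      (l.idxOf e₁ < l.idxOf e₂ ↔ l'.idxOf e₁ < l'.idxOf e₂)) :
    (greedy l).toFinset = (greedy l').toFinset ∨
      (f ∈ (greedy l').toFinset \ (greedy l).toFinset ∧
        IsSinglePathOrCycle
          (((greedy l).toFinset \ (greedy l').toFinset) ∪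
            ((greedy l').toFinset \ (greedy l).toFinset)) ∧
        f ∈ ((greedy l).toFinset \ (greedy l').toFinset) ∪
            ((greedy l').toFinset \ (greedy l).toFinset)) :=
  stmt_18_general wh wh' f hlt hrest l l' hperm hnodup hs hs' hties
end
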